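/- arXiv:1403.7320 — 2 statements merged into one kernel-verified Lean document; each statement's English description precedes it below -/
import Mathlib

section
/- For every nonnegative integer k, the subspace B_k of homogeneous polynomials of total degree k in B is invariant under all operators x_i∂_{x_j} − y_j∂_{y_i}, x_i∂_{y_j} + x_j∂_{y_i}, y_i∂_{x_j} + y_j∂_{x_i} (i,j ∈ {1,…,m}), and the only F-linear subspaces of B_k invariant under all of these operators are {0} and B_k. -/
open MvPolynomial

/-- The index set of the variables of `B = F[x_1,…,x_m,y_1,…,y_m]`:
`Sum.inl i` is `x_{i+1}` and `Sum.inr i` is `y_{i+1}` (`i : Fin m`). -/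
abbrev BIdx (m : ℕ) := Fin m ⊕ Fin m

/-- Multiplication by `x_{i+1}`. -/
noncomputable def mxB (F : Type*) [Field F] (m : ℕ) (i : Fin m) :
    Module.End F (MvPolynomial (BIdx m) F) :=
  LinearMap.mulLeft F (X (Sum.inl i))

/-- Multiplication by `y_{i+1}`. -/
noncomputable def myB (F : Type*) [Field F] (m : ℕ) (i : Fin m) :
    Module.End F (MvPolynomial (BIdx m) F) :=
  LinearMap.mulLeft F (X (Sum.inr i))

/-- The partial derivative `∂_{x_{i+1}}`. -/
noncomputable def dxB (F : Type*) [Field F] (m : ℕ) (i : Fin m) :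
    Module.End F (MvPolynomial (BIdx m) F) :=
  (pderiv (Sum.inl i)).toLinearMap

/-- The partial derivative `∂_{y_{i+1}}`. -/
noncomputable def dyB (F : Type*) [Field F] (m : ℕ) (i : Fin m) :
    Module.End F (MvPolynomial (BIdx m) F) :=
  (pderiv (Sum.inr i)).toLinearMap

/-- The operators spanning the image of `sp(2m,F)` under its standard oscillator
representation on `B`. -/
noncomputable def KOps (F : Type*) [Field F] (m : ℕ) :
    Set (Module.End F (MvPolynomial (BIdx m) F)) :=
  {T | (∃ i j : Fin m, T = mxB F m i * dxB F m j - myB F m j * dyB F m i) ∨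
       (∃ i j : Fin m, T = mxB F m i * dyB F m j + mxB F m j * dyB F m i) ∨
       (∃ i j : Fin m, T = myB F m i * dxB F m j + myB F m j * dxB F m i)}

set_option linter.unusedSectionVars false
set_option linter.unusedVariables false
set_option maxHeartbeats 1000000

namespace Stmt13Aux

open Finsupp

variable {F : Type*} [Field F] [CharZero F] {m : ℕ}

/-- degree of an exponent vector -/
lemma deg_add (a b : BIdx m →₀ ℕ) : (a + b).degree = a.degree + b.degree := by
  simp [Finsupp.degree_eq_weight_one, map_add]

lemma deg_single (v : BIdx m) (n : ℕ) : (Finsupp.single v n).degree = n := by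
  rw [Finsupp.degree_eq_weight_one, Finsupp.weight_apply, Finsupp.sum_single_index] <;> simp

lemma mem_hs_iff {f : MvPolynomial (BIdx m) F} {k : ℕ} :
    f ∈ homogeneousSubmodule (BIdx m) F k ↔ ∀ d, coeff d f ≠ 0 → Finsupp.degree d = k := by
  rw [mem_homogeneousSubmodule]
  constructor
  · intro h d hd
    have := h hd
    rw [Finsupp.degree_eq_weight_one]
    exact this
  · intro h d hd
    have := h d hd
    rwa [Finsupp.degree_eq_weight_one] at this

lemma single_le_of_ne {d : BIdx m →₀ ℕ} {v : BIdx m} (h : d v ≠ 0) :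
    Finsupp.single v 1 ≤ d := by
  rw [Finsupp.single_le_iff]
  omega

lemma sub_add_single {d : BIdx m →₀ ℕ} {v : BIdx m} (h : d v ≠ 0) :
    d - Finsupp.single v 1 + Finsupp.single v 1 = d :=
  tsub_add_cancel_of_le (single_le_of_ne h)

lemma coeff_pderiv (v : BIdx m) (f : MvPolynomial (BIdx m) F) (s : BIdx m →₀ ℕ) :
    coeff s (pderiv v f) = ((s v + 1 : ℕ) : F) * coeff (s + Finsupp.single v 1) f := by
  induction f using MvPolynomial.induction_on' with
  | add p q hp hq => simp [hp, hq, mul_add]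
  | monomial u a =>
    rw [pderiv_monomial, coeff_monomial, coeff_monomial]
    by_cases h : u = s + Finsupp.single v 1
    · subst h
      rw [if_pos, if_pos rfl]
      · have hv : (s + Finsupp.single v 1 : BIdx m →₀ ℕ) v = s v + 1 := by
          simp [Finsupp.add_apply, Finsupp.single_eq_same]
        rw [hv]
        push_cast
        ring
      · rw [add_tsub_cancel_right]
    · rw [if_neg h, mul_zero]
      by_cases h2 : u - Finsupp.single v 1 = s
      · rw [if_pos h2]
        have huv : u v = 0 := by
          by_contra huv
          exact h (by rw [← h2, sub_add_single huv])
        simp [huv]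
      · rw [if_neg h2]

lemma coeff_X_mul_pderiv (v : BIdx m) (f : MvPolynomial (BIdx m) F) (s : BIdx m →₀ ℕ) :
    coeff s (X v * pderiv v f) = ((s v : ℕ) : F) * coeff s f := by
  classical
  rw [coeff_X_mul']
  by_cases h : v ∈ s.support
  · rw [if_pos h]
    rw [coeff_pderiv]
    have hv : s v ≠ 0 := Finsupp.mem_support_iff.mp h
    rw [sub_add_single hv]
    congr 2
    rw [Finsupp.tsub_apply, Finsupp.single_eq_same]
    omega
  · rw [if_neg h]
    have : s v = 0 := Finsupp.notMem_support_iff.mp h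
    simp [this]

lemma hs_X_mul_pderiv {k : ℕ} (u v : BIdx m) {f : MvPolynomial (BIdx m) F}
    (hf : f ∈ homogeneousSubmodule (BIdx m) F k) :
    X u * pderiv v f ∈ homogeneousSubmodule (BIdx m) F k := by
  classical
  rw [mem_hs_iff] at hf ⊢
  intro d hd
  rw [coeff_X_mul'] at hd
  by_cases h : u ∈ d.support
  · rw [if_pos h] at hd
    rw [coeff_pderiv] at hd
    have h2 : coeff (d - Finsupp.single u 1 + Finsupp.single v 1) f ≠ 0 :=
      right_ne_zero_of_mul hd
    have h3 := hf _ h2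
    rw [deg_add, deg_single] at h3
    have hu : d u ≠ 0 := Finsupp.mem_support_iff.mp h
    have h4 : (d - Finsupp.single u 1).degree + 1 = d.degree := by
      conv_rhs => rw [← sub_add_single hu]
      rw [deg_add, deg_single]
    omega
  · rw [if_neg h] at hd
    exact absurd rfl hd


/-! ### The apolar pairing -/

noncomputable def ffact (s : BIdx m →₀ ℕ) : ℕ := ∏ v : BIdx m, Nat.factorial (s v)

lemma ffact_ne_zero (s : BIdx m →₀ ℕ) : ffact s ≠ 0 :=
  Finset.prod_ne_zero_iff.mpr fun v _ => Nat.factorial_ne_zero _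


lemma ffact_add_single (s : BIdx m →₀ ℕ) (v : BIdx m) :
    ffact (s + Finsupp.single v 1) = (s v + 1) * ffact s := by
  classical
  unfold ffact
  rw [← Finset.prod_erase_mul _ _ (Finset.mem_univ v),
      ← Finset.prod_erase_mul _ _ (Finset.mem_univ v)]
  have h1 : ∀ w ∈ Finset.univ.erase v,
      Nat.factorial ((s + Finsupp.single v 1 : BIdx m →₀ ℕ) w) = Nat.factorial (s w) := by
    intro w hw
    have hwv : w ≠ v := Finset.ne_of_mem_erase hw
    simp [Finsupp.add_apply, Finsupp.single_apply, Ne.symm hwv]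
  rw [Finset.prod_congr rfl h1]
  have h2 : Nat.factorial ((s + Finsupp.single v 1 : BIdx m →₀ ℕ) v)
      = (s v + 1) * Nat.factorial (s v) := by
    simp [Finsupp.add_apply, Finsupp.single_eq_same, Nat.factorial_succ]
  rw [h2]
  ring

noncomputable def pair (f g : MvPolynomial (BIdx m) F) : F :=
  ∑ s ∈ f.support, (ffact s : F) * coeff s f * coeff s g

lemma pair_eq_sum {f : MvPolynomial (BIdx m) F} {S : Finset (BIdx m →₀ ℕ)}
    (hS : f.support ⊆ S) (g : MvPolynomial (BIdx m) F) :
    pair f g = ∑ s ∈ S, (ffact s : F) * coeff s f * coeff s g := by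
  refine Finset.sum_subset hS fun s _ hs => ?_
  rw [MvPolynomial.notMem_support_iff.mp hs]
  ring

lemma pair_comm (f g : MvPolynomial (BIdx m) F) : pair f g = pair g f := by
  rw [pair_eq_sum (Finset.subset_union_left : f.support ⊆ f.support ∪ g.support) g,
      pair_eq_sum (Finset.subset_union_right : g.support ⊆ f.support ∪ g.support) f]
  exact Finset.sum_congr rfl fun s _ => by ring

lemma pair_add_right (f g g' : MvPolynomial (BIdx m) F) :
    pair f (g + g') = pair f g + pair f g' := by
  unfold pair
  rw [← Finset.sum_add_distrib]
  exact Finset.sum_congr rfl fun s _ => by rw [coeff_add]; ring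

lemma pair_smul_right (c : F) (f g : MvPolynomial (BIdx m) F) :
    pair f (c • g) = c * pair f g := by
  unfold pair
  rw [Finset.mul_sum]
  exact Finset.sum_congr rfl fun s _ => by rw [coeff_smul, smul_eq_mul]; ring

lemma pair_sub_right (f g g' : MvPolynomial (BIdx m) F) :
    pair f (g - g') = pair f g - pair f g' := by
  have := pair_add_right f (g - g') g'
  rw [sub_add_cancel] at this
  exact eq_sub_of_add_eq this.symm

lemma pair_X_mul (v : BIdx m) (f g : MvPolynomial (BIdx m) F) :
    pair (X v * f) g = pair f (pderiv v g) := by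
  classical
  have hsub : (X v * f).support ⊆ f.support.image (· + Finsupp.single v 1) := by
    intro t ht
    rw [MvPolynomial.mem_support_iff, coeff_X_mul'] at ht
    by_cases h : v ∈ t.support
    · rw [if_pos h] at ht
      refine Finset.mem_image.mpr ⟨t - Finsupp.single v 1, MvPolynomial.mem_support_iff.mpr ht, ?_⟩
      exact sub_add_single (Finsupp.mem_support_iff.mp h)
    · rw [if_neg h] at ht
      exact absurd rfl ht
  rw [pair_eq_sum hsub g,
      Finset.sum_image (fun a _ b _ h => by simpa using add_right_cancel h)]
  unfold pair
  refine Finset.sum_congr rfl fun t _ => ?_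
  have h1 : coeff (t + Finsupp.single v 1) (X v * f) = coeff t f := by
    rw [add_comm, coeff_X_mul]
  rw [h1, ffact_add_single, coeff_pderiv]
  push_cast
  ring

lemma pair_pderiv (v : BIdx m) (f g : MvPolynomial (BIdx m) F) :
    pair (pderiv v f) g = pair f (X v * g) := by
  rw [pair_comm f (X v * g), pair_X_mul, pair_comm]

lemma pair_op (u v : BIdx m) (f g : MvPolynomial (BIdx m) F) :
    pair (X u * pderiv v f) g = pair f (X v * pderiv u g) := by
  rw [pair_X_mul, pair_pderiv]

lemma pair_monomial_left (s : BIdx m →₀ ℕ) (c : F) (g : MvPolynomial (BIdx m) F) :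
    pair (monomial s c) g = (ffact s : F) * c * coeff s g := by
  rw [pair_eq_sum (MvPolynomial.support_monomial_subset) g, Finset.sum_singleton,
      MvPolynomial.coeff_monomial, if_pos rfl]

lemma pair_add_left (f f' g : MvPolynomial (BIdx m) F) :
    pair (f + f') g = pair f g + pair f' g := by
  rw [pair_comm, pair_add_right, pair_comm, pair_comm g f']

lemma pair_sub_left (f f' g : MvPolynomial (BIdx m) F) :
    pair (f - f') g = pair f g - pair f' g := by
  rw [pair_comm, pair_sub_right, pair_comm, pair_comm g f']

lemma pair_smul_left (c : F) (f g : MvPolynomial (BIdx m) F) :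
    pair (c • f) g = c * pair f g := by
  rw [pair_comm, pair_smul_right, pair_comm]




variable {F : Type*} [Field F] [CharZero F] {m : ℕ}

lemma K1_apply (i j : Fin m) (f : MvPolynomial (BIdx m) F) :
    (mxB F m i * dxB F m j - myB F m j * dyB F m i) f
      = X (Sum.inl i) * pderiv (Sum.inl j) f - X (Sum.inr j) * pderiv (Sum.inr i) f := rfl

lemma K2_apply (i j : Fin m) (f : MvPolynomial (BIdx m) F) :
    (mxB F m i * dyB F m j + mxB F m j * dyB F m i) f
      = X (Sum.inl i) * pderiv (Sum.inr j) f + X (Sum.inl j) * pderiv (Sum.inr i) f := rfl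

lemma K3_apply (i j : Fin m) (f : MvPolynomial (BIdx m) F) :
    (myB F m i * dxB F m j + myB F m j * dxB F m i) f
      = X (Sum.inr i) * pderiv (Sum.inl j) f + X (Sum.inr j) * pderiv (Sum.inl i) f := rfl

/-! ### y-free reduction -/

def yfreeS (s : BIdx m →₀ ℕ) : Prop := ∀ i : Fin m, s (Sum.inr i) = 0

def yfree (f : MvPolynomial (BIdx m) F) : Prop := ∀ s ∈ f.support, yfreeS s

noncomputable def ydegS (s : BIdx m →₀ ℕ) : ℕ := ∑ i : Fin m, s (Sum.inr i)

lemma pderiv_inr_eq_zero {f : MvPolynomial (BIdx m) F} (hf : yfree f) (i : Fin m) :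
    pderiv (Sum.inr i) f = 0 := by
  apply MvPolynomial.ext
  intro d
  rw [coeff_pderiv, coeff_zero]
  by_cases h : coeff (d + Finsupp.single (Sum.inr i) 1) f = 0
  · rw [h, mul_zero]
  · exfalso
    have hmem := MvPolynomial.mem_support_iff.mpr h
    have := hf _ hmem i
    simp [Finsupp.add_apply, Finsupp.single_eq_same] at this

lemma ydegS_sub_inl (t : BIdx m →₀ ℕ) (i : Fin m) :
    ydegS (t - Finsupp.single (Sum.inl i) 1) = ydegS t := by
  unfold ydegS
  refine Finset.sum_congr rfl fun j _ => ?_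
  rw [Finsupp.tsub_apply, Finsupp.single_apply, if_neg (by simp)]
  omega

lemma ydegS_add_inr (t : BIdx m →₀ ℕ) (i : Fin m) :
    ydegS (t + Finsupp.single (Sum.inr i) 1) = ydegS t + 1 := by
  unfold ydegS
  have : ∀ j : Fin m, (t + Finsupp.single (Sum.inr i) 1 : BIdx m →₀ ℕ) (Sum.inr j)
      = t (Sum.inr j) + (if i = j then 1 else 0) := by
    intro j
    rw [Finsupp.add_apply, Finsupp.single_apply]
    simp [Sum.inr.injEq]
  rw [Finset.sum_congr rfl fun j _ => this j, Finset.sum_add_distrib]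
  simp

lemma exists_yfree (W : Submodule F (MvPolynomial (BIdx m) F))
    (hinv : ∀ T ∈ KOps F m, ∀ f ∈ W, T f ∈ W)
    {f : MvPolynomial (BIdx m) F} (hfW : f ∈ W) (hf0 : f ≠ 0) :
    ∃ h, h ∈ W ∧ h ≠ 0 ∧ yfree h := by
  classical
  suffices H : ∀ n : ℕ, ∀ f : MvPolynomial (BIdx m) F, f ∈ W → f ≠ 0 →
      (∀ s ∈ f.support, ydegS s ≤ n) → ∃ h, h ∈ W ∧ h ≠ 0 ∧ yfree h by
    exact H (f.support.sup ydegS) f hfW hf0 (fun s hs => Finset.le_sup hs)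
  intro n
  induction n with
  | zero =>
    intro f hfW hf0 hb
    refine ⟨f, hfW, hf0, fun s hs i => ?_⟩
    have h1 := hb s hs
    have h2 : ydegS s = 0 := Nat.le_zero.mp h1
    exact (Finset.sum_eq_zero_iff.mp h2) i (Finset.mem_univ i)
  | succ n ih =>
    intro f hfW hf0 hb
    by_cases hy : yfree f
    · exact ⟨f, hfW, hf0, hy⟩
    · simp only [yfree, yfreeS] at hy
      push_neg at hy
      obtain ⟨s₀, hs₀, i, hi⟩ := hy
      set g := X (Sum.inl i) * pderiv (Sum.inr i) f with hg
      have hgW : g ∈ W := by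
        have h1 := hinv _ (Or.inr (Or.inl ⟨i, i, rfl⟩)) f hfW
        have h2 : (mxB F m i * dyB F m i + mxB F m i * dyB F m i) f = (2 : F) • g := by
          rw [K2_apply, two_smul]
        have h3 : g = (2 : F)⁻¹ • ((2 : F) • g) := by
          rw [smul_smul, inv_mul_cancel₀ two_ne_zero, one_smul]
        rw [h3, ← h2]
        exact W.smul_mem _ h1
      have hpd : coeff (s₀ - Finsupp.single (Sum.inr i) 1) (pderiv (Sum.inr i) f) ≠ 0 := by
        rw [coeff_pderiv, sub_add_single hi]
        exact mul_ne_zero (Nat.cast_ne_zero.mpr (Nat.succ_ne_zero _))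
          (MvPolynomial.mem_support_iff.mp hs₀)
      have hg0 : g ≠ 0 := by
        refine mul_ne_zero (MvPolynomial.X_ne_zero _) fun hz => hpd ?_
        rw [hz, coeff_zero]
      refine ih g hgW hg0 ?_
      intro t ht
      have hct := MvPolynomial.mem_support_iff.mp ht
      rw [hg, coeff_X_mul'] at hct
      by_cases hmem : Sum.inl i ∈ t.support
      · rw [if_pos hmem] at hct
        rw [coeff_pderiv] at hct
        have h2 : coeff ((t - Finsupp.single (Sum.inl i) 1) + Finsupp.single (Sum.inr i) 1) f ≠ 0 :=
          right_ne_zero_of_mul hct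
        have h3 := hb _ (MvPolynomial.mem_support_iff.mpr h2)
        rw [ydegS_add_inr, ydegS_sub_inl] at h3
        omega
      · rw [if_neg hmem] at hct
        exact absurd rfl hct

/-! ### extraction of a single monomial -/

lemma eq_monomial_of_support_subset {f : MvPolynomial (BIdx m) F} {s₀ : BIdx m →₀ ℕ}
    (h : ∀ d ∈ f.support, d = s₀) : f = monomial s₀ (coeff s₀ f) := by
  apply MvPolynomial.ext
  intro d
  rw [coeff_monomial]
  by_cases hd : s₀ = d
  · subst hd; rw [if_pos rfl]
  · rw [if_neg hd]
    by_contra hc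
    exact hd ((h d (MvPolynomial.mem_support_iff.mpr hc)).symm)

lemma exists_monomial_mem (W : Submodule F (MvPolynomial (BIdx m) F))
    (hinv : ∀ T ∈ KOps F m, ∀ f ∈ W, T f ∈ W)
    {h : MvPolynomial (BIdx m) F} (hW : h ∈ W) (h0 : h ≠ 0) (hyf : yfree h) :
    ∃ s c, c ≠ 0 ∧ yfreeS s ∧ (monomial s c : MvPolynomial (BIdx m) F) ∈ W := by
  classical
  have hne : h.support.Nonempty := by
    rw [Finset.nonempty_iff_ne_empty]
    intro hc
    exact h0 (MvPolynomial.support_eq_empty.mp hc)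
  obtain ⟨s₀, hs₀⟩ := hne
  have hys₀ : yfreeS s₀ := hyf s₀ hs₀
  suffices H : ∀ N : ℕ, ∀ f : MvPolynomial (BIdx m) F, f ∈ W → yfree f → coeff s₀ f ≠ 0 →
      (f.support.erase s₀).card ≤ N → ∃ c, c ≠ 0 ∧ (monomial s₀ c : MvPolynomial (BIdx m) F) ∈ W by
    obtain ⟨c, hc, hm'⟩ := H (h.support.erase s₀).card h hW hyf
      (MvPolynomial.mem_support_iff.mp hs₀) le_rfl
    exact ⟨s₀, c, hc, hys₀, hm'⟩
  intro N
  induction N with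
  | zero =>
    intro f hfW hyff hcf hcard
    have hsub : ∀ d ∈ f.support, d = s₀ := by
      intro d hd
      by_contra hds
      have : d ∈ f.support.erase s₀ := Finset.mem_erase.mpr ⟨hds, hd⟩
      rw [Finset.card_eq_zero.mp (Nat.le_zero.mp hcard)] at this
      exact absurd this (Finset.notMem_empty d)
    exact ⟨coeff s₀ f, hcf, by rw [← eq_monomial_of_support_subset hsub]; exact hfW⟩
  | succ N ih =>
    intro f hfW hyff hcf hcard
    by_cases hsub : ∀ d ∈ f.support, d = s₀
    · exact ⟨coeff s₀ f, hcf, by rw [← eq_monomial_of_support_subset hsub]; exact hfW⟩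
    · push_neg at hsub
      obtain ⟨t, ht, hts⟩ := hsub
      have hyt : yfreeS t := hyff t ht
      have hvi : ∃ i : Fin m, t (Sum.inl i) ≠ s₀ (Sum.inl i) := by
        by_contra hC
        push_neg at hC
        apply hts
        ext v
        rcases v with i | j
        · exact hC i
        · rw [hyt j, hys₀ j]
      obtain ⟨i, hi⟩ := hvi
      set g := X (Sum.inl i) * pderiv (Sum.inl i) f - (t (Sum.inl i) : F) • f with hgdef
      have hgW : g ∈ W := by
        have h1 := hinv _ (Or.inl ⟨i, i, rfl⟩) f hfW
        rw [K1_apply, pderiv_inr_eq_zero hyff, mul_zero, sub_zero] at h1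
        exact W.sub_mem h1 (W.smul_mem _ hfW)
      have hcoe : ∀ s, coeff s g = ((s (Sum.inl i) : F) - (t (Sum.inl i) : F)) * coeff s f := by
        intro s
        rw [hgdef, coeff_sub, coeff_X_mul_pderiv, coeff_smul, smul_eq_mul]
        ring
      have hsupg : g.support ⊆ f.support := by
        intro s hs
        have := MvPolynomial.mem_support_iff.mp hs
        rw [hcoe] at this
        exact MvPolynomial.mem_support_iff.mpr (right_ne_zero_of_mul this)
      have hyfg : yfree g := fun s hs => hyff s (hsupg hs)
      have hcfg : coeff s₀ g ≠ 0 := by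
        rw [hcoe]
        refine mul_ne_zero (sub_ne_zero.mpr ?_) hcf
        exact fun hc => hi (Nat.cast_injective hc).symm
      have htg : coeff t g = 0 := by rw [hcoe, sub_self, zero_mul]
      have hcardg : (g.support.erase s₀).card ≤ N := by
        have hsub2 : g.support.erase s₀ ⊆ (f.support.erase s₀).erase t := by
          intro s hs
          rw [Finset.mem_erase] at hs
          refine Finset.mem_erase.mpr ⟨?_, Finset.mem_erase.mpr ⟨hs.1, hsupg hs.2⟩⟩
          intro hst
          subst hst
          exact (MvPolynomial.mem_support_iff.mp hs.2) htg
        have hmemt : t ∈ f.support.erase s₀ := Finset.mem_erase.mpr ⟨hts, ht⟩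
        have h1 := Finset.card_le_card hsub2
        rw [Finset.card_erase_of_mem hmemt] at h1
        have h2 : 1 ≤ (f.support.erase s₀).card := Finset.card_pos.mpr ⟨t, hmemt⟩
        omega
      exact ih g hgW hyfg hcfg hcardg

/-! ### pushing a monomial into the corner `x₁^k` -/

lemma degree_eq_sum_univ (s : BIdx m →₀ ℕ) : s.degree = ∑ v : BIdx m, s v :=
  Finset.sum_subset (Finset.subset_univ _)
    (fun v _ hv => Finsupp.notMem_support_iff.mp hv)

lemma deg_yfree (s : BIdx m →₀ ℕ) (h : yfreeS s) :
    s.degree = ∑ i : Fin m, s (Sum.inl i) := by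
  rw [degree_eq_sum_univ, Fintype.sum_sum_type, Finset.sum_eq_zero (fun i _ => h i), add_zero]

lemma corner (hm : 1 ≤ m) (k : ℕ) (W : Submodule F (MvPolynomial (BIdx m) F))
    (hle : W ≤ homogeneousSubmodule (BIdx m) F k)
    (hinv : ∀ T ∈ KOps F m, ∀ f ∈ W, T f ∈ W) :
    ∀ N : ℕ, ∀ (s : BIdx m →₀ ℕ) (c : F), c ≠ 0 → yfreeS s →
      (monomial s c : MvPolynomial (BIdx m) F) ∈ W →
      k - s (Sum.inl (⟨0, hm⟩ : Fin m)) ≤ N →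
      ∃ c' : F, c' ≠ 0 ∧
        (monomial (Finsupp.single (Sum.inl (⟨0, hm⟩ : Fin m)) k) c' : MvPolynomial (BIdx m) F) ∈ W := by
  classical
  set i₀ : Fin m := ⟨0, hm⟩ with hi₀
  have main : ∀ (s : BIdx m →₀ ℕ) (c : F), c ≠ 0 → yfreeS s →
      (monomial s c : MvPolynomial (BIdx m) F) ∈ W →
      (∑ i : Fin m, s (Sum.inl i) = k) → s (Sum.inl i₀) = k →
      ∃ c' : F, c' ≠ 0 ∧
        (monomial (Finsupp.single (Sum.inl i₀) k) c' : MvPolynomial (BIdx m) F) ∈ W := by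
    intro s c hc hyf hmem hdeg hk
    have hzero : ∀ i : Fin m, i ≠ i₀ → s (Sum.inl i) = 0 := by
      intro i hii
      have h1 : ∑ j ∈ Finset.univ.erase i₀, s (Sum.inl j) + s (Sum.inl i₀)
          = ∑ j : Fin m, s (Sum.inl j) := Finset.sum_erase_add _ _ (Finset.mem_univ i₀)
      have h2 : ∑ j ∈ Finset.univ.erase i₀, s (Sum.inl j) = 0 := by omega
      exact Finset.sum_eq_zero_iff.mp h2 i (Finset.mem_erase.mpr ⟨hii, Finset.mem_univ i⟩)
    have hss : s = Finsupp.single (Sum.inl i₀) k := by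
      ext v
      rcases v with i | j
      · rw [Finsupp.single_apply]
        by_cases hii : i = i₀
        · subst hii; rw [if_pos rfl, hk]
        · rw [if_neg (by simp [Ne.symm hii]), hzero i hii]
      · rw [Finsupp.single_apply, if_neg (by simp), hyf j]
    exact ⟨c, hc, hss ▸ hmem⟩
  intro N
  induction N with
  | zero =>
    intro s c hc hyf hmem hbound
    have hdegk : s.degree = k := by
      refine mem_hs_iff.mp (hle hmem) s ?_
      rw [coeff_monomial, if_pos rfl]
      exact hc
    have hdeg : ∑ i : Fin m, s (Sum.inl i) = k := by rw [← deg_yfree s hyf, hdegk]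
    have hle' : s (Sum.inl i₀) ≤ k := by
      rw [← hdeg]
      exact Finset.single_le_sum (f := fun j : Fin m => s (Sum.inl j))
        (fun j _ => Nat.zero_le _) (Finset.mem_univ i₀)
    exact main s c hc hyf hmem hdeg (by omega)
  | succ N ih =>
    intro s c hc hyf hmem hbound
    have hdegk : s.degree = k := by
      refine mem_hs_iff.mp (hle hmem) s ?_
      rw [coeff_monomial, if_pos rfl]
      exact hc
    have hdeg : ∑ i : Fin m, s (Sum.inl i) = k := by rw [← deg_yfree s hyf, hdegk]
    have hle' : s (Sum.inl i₀) ≤ k := by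
      rw [← hdeg]
      exact Finset.single_le_sum (f := fun j : Fin m => s (Sum.inl j))
        (fun j _ => Nat.zero_le _) (Finset.mem_univ i₀)
    by_cases hk : s (Sum.inl i₀) = k
    · exact main s c hc hyf hmem hdeg hk
    · have hlt : s (Sum.inl i₀) < k := lt_of_le_of_ne hle' hk
      have hvj : ∃ j : Fin m, j ≠ i₀ ∧ s (Sum.inl j) ≠ 0 := by
        by_contra hC
        push_neg at hC
        have h1 : ∑ j : Fin m, s (Sum.inl j) = s (Sum.inl i₀) :=
          Finset.sum_eq_single_of_mem i₀ (Finset.mem_univ i₀)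
            (fun j _ hj => hC j hj)
        omega
      obtain ⟨j, hji, hj0⟩ := hvj
      have hymon : yfree (monomial s c : MvPolynomial (BIdx m) F) := by
        intro d hd
        have := MvPolynomial.support_monomial_subset hd
        rw [Finset.mem_singleton] at this
        rw [this]
        exact hyf
      have hK := hinv _ (Or.inl ⟨i₀, j, rfl⟩) _ hmem
      have hXmon : (X (Sum.inl i₀) : MvPolynomial (BIdx m) F)
          = monomial (Finsupp.single (Sum.inl i₀) 1) 1 := rfl
      have heq : (mxB F m i₀ * dxB F m j - myB F m j * dyB F m i₀)
            (monomial s c : MvPolynomial (BIdx m) F)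
          = monomial (Finsupp.single (Sum.inl i₀) 1 + (s - Finsupp.single (Sum.inl j) 1))
              (c * (s (Sum.inl j) : F)) := by
        rw [K1_apply, pderiv_inr_eq_zero hymon, mul_zero, sub_zero, pderiv_monomial,
            hXmon, monomial_mul, one_mul]
      set s' := Finsupp.single (Sum.inl i₀) 1 + (s - Finsupp.single (Sum.inl j) 1) with hs'
      have hc' : c * (s (Sum.inl j) : F) ≠ 0 :=
        mul_ne_zero hc (Nat.cast_ne_zero.mpr hj0)
      have hyf' : yfreeS s' := by
        intro i
        rw [hs', Finsupp.add_apply, Finsupp.tsub_apply, Finsupp.single_apply,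
            Finsupp.single_apply, if_neg (by simp), if_neg (by simp), hyf i]
        omega
      have hval : s' (Sum.inl i₀) = s (Sum.inl i₀) + 1 := by
        rw [hs', Finsupp.add_apply, Finsupp.tsub_apply, Finsupp.single_eq_same,
            Finsupp.single_apply, if_neg (by simp [hji]), Nat.sub_zero]
        omega
      refine ih s' (c * (s (Sum.inl j) : F)) hc' hyf' ?_ ?_
      · rw [← heq]; exact hK
      · omega

lemma stepA (hm : 1 ≤ m) (k : ℕ) (W : Submodule F (MvPolynomial (BIdx m) F))
    (hle : W ≤ homogeneousSubmodule (BIdx m) F k)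
    (hinv : ∀ T ∈ KOps F m, ∀ f ∈ W, T f ∈ W) (hne : W ≠ ⊥) :
    ∃ c : F, c ≠ 0 ∧
      (monomial (Finsupp.single (Sum.inl (⟨0, hm⟩ : Fin m)) k) c : MvPolynomial (BIdx m) F) ∈ W := by
  obtain ⟨f, hfW, hf0⟩ := (Submodule.ne_bot_iff W).mp hne
  obtain ⟨h, hW, h0, hyf⟩ := exists_yfree W hinv hfW hf0
  obtain ⟨s, c, hc, hys, hmem⟩ := exists_monomial_mem W hinv hW h0 hyf
  exact corner hm k W hle hinv k s c hc hys hmem (Nat.sub_le _ _)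

/-! ### invariance of `B_k` (part 1) -/

lemma invariant (k : ℕ) : ∀ T ∈ KOps F m, ∀ f ∈ homogeneousSubmodule (BIdx m) F k,
    T f ∈ homogeneousSubmodule (BIdx m) F k := by
  rintro T (⟨i, j, rfl⟩ | ⟨i, j, rfl⟩ | ⟨i, j, rfl⟩) f hf
  · rw [K1_apply]
    exact Submodule.sub_mem _ (hs_X_mul_pderiv _ _ hf) (hs_X_mul_pderiv _ _ hf)
  · rw [K2_apply]
    exact Submodule.add_mem _ (hs_X_mul_pderiv _ _ hf) (hs_X_mul_pderiv _ _ hf)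
  · rw [K3_apply]
    exact Submodule.add_mem _ (hs_X_mul_pderiv _ _ hf) (hs_X_mul_pderiv _ _ hf)

/-! ### adjoints of the operators -/

lemma pair_zero_right (f : MvPolynomial (BIdx m) F) : pair f 0 = 0 := by
  unfold pair
  simp

lemma pair_adj {T : Module.End F (MvPolynomial (BIdx m) F)} (hT : T ∈ KOps F m) :
    ∃ T' ∈ KOps F m, ∀ w h : MvPolynomial (BIdx m) F, pair w (T h) = pair (T' w) h := by
  rcases hT with ⟨i, j, rfl⟩ | ⟨i, j, rfl⟩ | ⟨i, j, rfl⟩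
  · refine ⟨mxB F m j * dxB F m i - myB F m i * dyB F m j, Or.inl ⟨j, i, rfl⟩, fun w h => ?_⟩
    rw [K1_apply, K1_apply, pair_sub_right, pair_sub_left,
        pair_op (Sum.inl j) (Sum.inl i) w h, pair_op (Sum.inr i) (Sum.inr j) w h]
  · refine ⟨myB F m j * dxB F m i + myB F m i * dxB F m j, Or.inr (Or.inr ⟨j, i, rfl⟩),
      fun w h => ?_⟩
    rw [K2_apply, K3_apply, pair_add_right, pair_add_left,
        pair_op (Sum.inr j) (Sum.inl i) w h, pair_op (Sum.inr i) (Sum.inl j) w h]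
  · refine ⟨mxB F m j * dyB F m i + mxB F m i * dyB F m j, Or.inr (Or.inl ⟨j, i, rfl⟩),
      fun w h => ?_⟩
    rw [K3_apply, K2_apply, pair_add_right, pair_add_left,
        pair_op (Sum.inl j) (Sum.inr i) w h, pair_op (Sum.inl i) (Sum.inr j) w h]

/-! ### part 2: irreducibility -/

lemma part2 (hm : 1 ≤ m) (k : ℕ) (W : Submodule F (MvPolynomial (BIdx m) F))
    (hle : W ≤ homogeneousSubmodule (BIdx m) F k)
    (hinv : ∀ T ∈ KOps F m, ∀ f ∈ W, T f ∈ W) :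
    W = ⊥ ∨ W = homogeneousSubmodule (BIdx m) F k := by
  classical
  by_cases hbot : W = ⊥
  · exact Or.inl hbot
  right
  by_contra hne
  have hVle : homogeneousSubmodule (BIdx m) F k ≤ restrictTotalDegree (BIdx m) F k := by
    intro p hp
    rw [mem_restrictTotalDegree]
    exact ((mem_homogeneousSubmodule _ _).mp hp).totalDegree_le
  haveI hVfd : FiniteDimensional F (homogeneousSubmodule (BIdx m) F k) :=
    Submodule.finiteDimensional_of_le hVle
  set V := homogeneousSubmodule (BIdx m) F k with hVdef
  set W₀ : Submodule F V := W.comap V.subtype with hW₀def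
  have hW₀top : W₀ ≠ ⊤ := by
    intro htop
    apply hne
    refine le_antisymm hle fun x hx => ?_
    have : (⟨x, hx⟩ : V) ∈ W₀ := htop ▸ Submodule.mem_top
    exact this
  obtain ⟨φ, hφ0, hφbot⟩ :=
    Submodule.exists_dual_map_eq_bot_of_lt_top (lt_top_iff_ne_top.mpr hW₀top) inferInstance
  let Φ : V →ₗ[F] Module.Dual F V :=
    { toFun := fun g =>
        { toFun := fun w => pair (w : MvPolynomial (BIdx m) F) (g : MvPolynomial (BIdx m) F)
          map_add' := fun a b => by simp [Submodule.coe_add, pair_add_left]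
          map_smul' := fun c a => by simp [Submodule.coe_smul, pair_smul_left] }
      map_add' := fun a b => by
        ext w
        simp [Submodule.coe_add, pair_add_right]
      map_smul' := fun c a => by
        ext w
        simp [Submodule.coe_smul, pair_smul_right] }
  have hΦinj : Function.Injective Φ := by
    rw [← LinearMap.ker_eq_bot, Submodule.eq_bot_iff]
    intro g hg
    rw [LinearMap.mem_ker] at hg
    have hco : ∀ s : BIdx m →₀ ℕ, coeff s (g : MvPolynomial (BIdx m) F) = 0 := by
      intro s
      by_cases hdeg : Finsupp.degree s = k
      · have hmon : (monomial s (1 : F) : MvPolynomial (BIdx m) F) ∈ V := by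
          rw [hVdef, mem_homogeneousSubmodule]
          exact isHomogeneous_monomial _ hdeg
        have h1 : pair (monomial s (1 : F)) (g : MvPolynomial (BIdx m) F) = 0 := by
          have := congrArg (fun (ψ : Module.Dual F V) => ψ ⟨monomial s 1, hmon⟩) hg
          simpa [Φ] using this
        rw [pair_monomial_left] at h1
        have hff : ((ffact s : ℕ) : F) ≠ 0 := Nat.cast_ne_zero.mpr (ffact_ne_zero s)
        by_contra hc
        exact (mul_ne_zero (mul_ne_zero hff one_ne_zero) hc) h1
      · by_contra hc
        exact hdeg (mem_hs_iff.mp g.2 s hc)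
    have : (g : MvPolynomial (BIdx m) F) = 0 := by
      apply MvPolynomial.ext
      intro d
      rw [hco d, coeff_zero]
    exact Submodule.coe_eq_zero.mp this
  have hsurj : Function.Surjective Φ :=
    (LinearMap.injective_iff_surjective_of_finrank_eq_finrank
      (Subspace.dual_finrank_eq).symm).mp hΦinj
  obtain ⟨g, hg⟩ := hsurj φ
  have hgne : (g : MvPolynomial (BIdx m) F) ≠ 0 := by
    intro hz
    apply hφ0
    rw [← hg]
    have hz' : g = 0 := Submodule.coe_eq_zero.mp hz
    rw [hz', map_zero]
  have hgW : ∀ w ∈ W, pair w (g : MvPolynomial (BIdx m) F) = 0 := by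
    intro w hw
    have hwV : w ∈ V := hle hw
    have hmem : (⟨w, hwV⟩ : V) ∈ W₀ := hw
    have hmap : φ ⟨w, hwV⟩ ∈ W₀.map φ := Submodule.mem_map_of_mem hmem
    rw [hφbot] at hmap
    have hz : φ ⟨w, hwV⟩ = 0 := (Submodule.mem_bot F).mp hmap
    calc pair w (g : MvPolynomial (BIdx m) F) = Φ g ⟨w, hwV⟩ := rfl
      _ = φ ⟨w, hwV⟩ := by rw [hg]
      _ = 0 := hz
  let W' : Submodule F (MvPolynomial (BIdx m) F) :=
    { carrier := {h | h ∈ V ∧ ∀ w ∈ W, pair w h = 0}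
      add_mem' := fun ha hb =>
        ⟨V.add_mem ha.1 hb.1,
          fun w hw => by rw [pair_add_right, ha.2 w hw, hb.2 w hw, add_zero]⟩
      zero_mem' := ⟨V.zero_mem, fun w _ => pair_zero_right w⟩
      smul_mem' := fun c x hx =>
        ⟨V.smul_mem c hx.1, fun w hw => by rw [pair_smul_right, hx.2 w hw, mul_zero]⟩ }
  have hW'le : W' ≤ V := fun h hh => hh.1
  have hW'inv : ∀ T ∈ KOps F m, ∀ f ∈ W', T f ∈ W' := by
    intro T hT h hh
    obtain ⟨T', hT', hadj⟩ := pair_adj hT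
    exact ⟨invariant k T hT h hh.1,
      fun w hw => by rw [hadj w h]; exact hh.2 (T' w) (hinv T' hT' w hw)⟩
  have hW'ne : W' ≠ ⊥ := by
    rw [Submodule.ne_bot_iff]
    exact ⟨(g : MvPolynomial (BIdx m) F), ⟨g.2, hgW⟩, hgne⟩
  obtain ⟨c, hc, hcW⟩ := stepA hm k W hle hinv hbot
  obtain ⟨c', hc', hcW'⟩ := stepA hm k W' hW'le hW'inv hW'ne
  have h0 := hcW'.2 _ hcW
  rw [pair_monomial_left, coeff_monomial, if_pos rfl] at h0
  exact (mul_ne_zero (mul_ne_zero (Nat.cast_ne_zero.mpr (ffact_ne_zero _)) hc) hc') h0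

end Stmt13Aux

/-- each space `B_k` of homogeneous polynomials of degree `k` is invariant
under all the oscillator operators of `sp(2m,F)`, and has no nontrivial invariant
subspaces. -/
theorem stmt_13 (F : Type*) [Field F] [CharZero F] (m : ℕ) (hm : 1 ≤ m) (k : ℕ) :
    (∀ T ∈ KOps F m, ∀ f ∈ homogeneousSubmodule (BIdx m) F k,
        T f ∈ homogeneousSubmodule (BIdx m) F k) ∧
    (∀ W : Submodule F (MvPolynomial (BIdx m) F),
      W ≤ homogeneousSubmodule (BIdx m) F k →
      (∀ T ∈ KOps F m, ∀ f ∈ W, T f ∈ W) →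
      W = ⊥ ∨ W = homogeneousSubmodule (BIdx m) F k) :=
  ⟨Stmt13Aux.invariant k, fun W hle hinv => Stmt13Aux.part2 hm k W hle hinv⟩
end

section
/- Assume m1 ≥ 1, and let c ∈ F not be of the form k·1_F for any integer k. Then the only F-linear subspaces of A invariant under every operator in the family Π(c;m1,m2) are {0} and A. -/
open MvPolynomial

/-- The index set of the variables `x_0,x_1,…,x_m,y_1,…,y_m`:
`Sum.inl i` is `x_i` (`i = 0,…,m`) and `Sum.inr i` is `y_{i+1}` (`i = 0,…,m-1`). -/
abbrev SpIdx (m : ℕ) := Fin (m + 1) ⊕ Fin m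

/-- Multiplication by `x_i` (`i = 0,…,m`). -/
noncomputable def mx (F : Type*) [Field F] (m : ℕ) (i : Fin (m + 1)) :
    Module.End F (MvPolynomial (SpIdx m) F) :=
  LinearMap.mulLeft F (X (Sum.inl i))

/-- Multiplication by `y_{i+1}` (`i : Fin m`). -/
noncomputable def my (F : Type*) [Field F] (m : ℕ) (i : Fin m) :
    Module.End F (MvPolynomial (SpIdx m) F) :=
  LinearMap.mulLeft F (X (Sum.inr i))

/-- The partial derivative `∂_{x_i}`. -/
noncomputable def dx (F : Type*) [Field F] (m : ℕ) (i : Fin (m + 1)) :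
    Module.End F (MvPolynomial (SpIdx m) F) :=
  (pderiv (Sum.inl i)).toLinearMap

/-- The partial derivative `∂_{y_{i+1}}`. -/
noncomputable def dy (F : Type*) [Field F] (m : ℕ) (i : Fin m) :
    Module.End F (MvPolynomial (SpIdx m) F) :=
  (pderiv (Sum.inr i)).toLinearMap

/-- The twisted Euler operator
`D̃ = x_0∂_{x_0} + Σ_{r>m1} x_r∂_{x_r} − Σ_{i≤m1} x_i∂_{x_i}
 + Σ_{i≤m2} y_i∂_{y_i} − Σ_{r>m2} y_r∂_{y_r}`
(a variable `i : Fin m` stands for the paper's index `i+1`). -/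
noncomputable def DtSp (F : Type*) [Field F] (m m1 m2 : ℕ) :
    Module.End F (MvPolynomial (SpIdx m) F) :=
  mx F m 0 * dx F m 0 +
    ∑ i : Fin m,
      (if (i : ℕ) < m1 then -(mx F m i.succ * dx F m i.succ)
        else mx F m i.succ * dx F m i.succ) +
    ∑ i : Fin m,
      (if (i : ℕ) < m2 then my F m i * dy F m i else -(my F m i * dy F m i))

/-- `c̃ = c + m2 − m1 − m`. -/
def ct (F : Type*) [Field F] (m m1 m2 : ℕ) (c : F) : F :=
  c + (m2 : F) - (m1 : F) - (m : F)

/-- The operators `Ex_{i,j}`. -/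
noncomputable def Ex (F : Type*) [Field F] (m m1 : ℕ) (i j : Fin m) :
    Module.End F (MvPolynomial (SpIdx m) F) :=
  if (i : ℕ) < m1 then
    if (j : ℕ) < m1 then
      -(mx F m j.succ * dx F m i.succ) - (if i = j then 1 else 0)
    else dx F m i.succ * dx F m j.succ
  else
    if (j : ℕ) < m1 then -(mx F m i.succ * mx F m j.succ)
    else mx F m i.succ * dx F m j.succ

/-- The operators `Ey_{i,j}`. -/
noncomputable def Ey (F : Type*) [Field F] (m m2 : ℕ) (i j : Fin m) :
    Module.End F (MvPolynomial (SpIdx m) F) :=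
  if (i : ℕ) < m2 then
    if (j : ℕ) < m2 then my F m i * dy F m j
    else -(my F m i * my F m j)
  else
    if (j : ℕ) < m2 then dy F m i * dy F m j
    else -(my F m j * dy F m i) - (if i = j then 1 else 0)

/-- The operators `Fo_{i,j}`. -/
noncomputable def Fo (F : Type*) [Field F] (m m1 m2 : ℕ) (i j : Fin m) :
    Module.End F (MvPolynomial (SpIdx m) F) :=
  if (i : ℕ) < m1 then
    if (j : ℕ) < m2 then dx F m i.succ * dy F m j
    else -(my F m j * dx F m i.succ)
  else
    if (j : ℕ) < m2 then mx F m i.succ * dy F m j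
    else -(mx F m i.succ * my F m j)

/-- The operators `Go_{i,j}`. -/
noncomputable def Go (F : Type*) [Field F] (m m1 m2 : ℕ) (i j : Fin m) :
    Module.End F (MvPolynomial (SpIdx m) F) :=
  if (j : ℕ) < m1 then
    if (i : ℕ) < m2 then -(mx F m j.succ * my F m i)
    else -(mx F m j.succ * dy F m i)
  else
    if (i : ℕ) < m2 then my F m i * dx F m j.succ
    else dx F m j.succ * dy F m i

/-- `U = −∂_{x_0}`. -/
noncomputable def Usp (F : Type*) [Field F] (m : ℕ) :
    Module.End F (MvPolynomial (SpIdx m) F) :=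
  -dx F m 0

/-- `V = x_0 ∘ (D̃ + c̃·id)`. -/
noncomputable def Vsp (F : Type*) [Field F] (m m1 m2 : ℕ) (c : F) :
    Module.End F (MvPolynomial (SpIdx m) F) :=
  mx F m 0 * (DtSp F m m1 m2 + ct F m m1 m2 c • 1)

/-- The operators `R_i`. -/
noncomputable def Rsp (F : Type*) [Field F] (m m1 m2 : ℕ) (i : Fin m) :
    Module.End F (MvPolynomial (SpIdx m) F) :=
  if (i : ℕ) < m1 then dx F m 0 * dx F m i.succ + dy F m i
  else if (i : ℕ) < m2 then mx F m i.succ * dx F m 0 + dy F m i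
  else mx F m i.succ * dx F m 0 - my F m i

/-- The operators `S_i`. -/
noncomputable def Ssp (F : Type*) [Field F] (m m1 m2 : ℕ) (i : Fin m) :
    Module.End F (MvPolynomial (SpIdx m) F) :=
  if (i : ℕ) < m1 then my F m i * dx F m 0 + mx F m i.succ
  else if (i : ℕ) < m2 then my F m i * dx F m 0 - dx F m i.succ
  else dx F m 0 * dy F m i - dx F m i.succ

/-- The operators `W_i`. -/
noncomputable def Wsp (F : Type*) [Field F] (m m1 m2 : ℕ) (c : F) (i : Fin m) :
    Module.End F (MvPolynomial (SpIdx m) F) :=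
  if (i : ℕ) < m1 then
    -(mx F m 0 * mx F m i.succ) - my F m i * (DtSp F m m1 m2 + ct F m m1 m2 c • 1)
  else if (i : ℕ) < m2 then
    mx F m 0 * dx F m i.succ - my F m i * (DtSp F m m1 m2 + ct F m m1 m2 c • 1)
  else
    mx F m 0 * dx F m i.succ - (DtSp F m m1 m2 + (ct F m m1 m2 c - 1) • 1) * dy F m i

/-- The operators `Z_i`. -/
noncomputable def Zsp (F : Type*) [Field F] (m m1 m2 : ℕ) (c : F) (i : Fin m) :
    Module.End F (MvPolynomial (SpIdx m) F) :=
  if (i : ℕ) < m1 then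
    mx F m 0 * dy F m i + (DtSp F m m1 m2 + (ct F m m1 m2 c - 1) • 1) * dx F m i.succ
  else if (i : ℕ) < m2 then
    mx F m 0 * dy F m i + mx F m i.succ * (DtSp F m m1 m2 + ct F m m1 m2 c • 1)
  else
    -(mx F m 0 * my F m i) + mx F m i.succ * (DtSp F m m1 m2 + ct F m m1 m2 c • 1)

/-- `H_0 = D̃ + x_0∂_{x_0} + c̃·id`. -/
noncomputable def H0sp (F : Type*) [Field F] (m m1 m2 : ℕ) (c : F) :
    Module.End F (MvPolynomial (SpIdx m) F) :=
  DtSp F m m1 m2 + mx F m 0 * dx F m 0 + ct F m m1 m2 c • 1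

/-- The family `Π(c;m1,m2)` of twisted projective oscillator operators, realizing the
representation `π_{c,S}` of `sp(2m+2,F)` on `A`. -/
noncomputable def FamT (F : Type*) [Field F] (m m1 m2 : ℕ) (c : F) :
    Set (Module.End F (MvPolynomial (SpIdx m) F)) :=
  {T | (∃ i j : Fin m, T = Ex F m m1 i j - Ey F m m2 j i) ∨
       (∃ i j : Fin m, T = Fo F m m1 m2 i j + Fo F m m1 m2 j i) ∨
       (∃ i j : Fin m, T = Go F m m1 m2 i j + Go F m m1 m2 j i) ∨
       T = Usp F m ∨
       T = Vsp F m m1 m2 c ∨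
       (∃ i : Fin m, T = Rsp F m m1 m2 i) ∨
       (∃ i : Fin m, T = Ssp F m m1 m2 i) ∨
       (∃ i : Fin m, T = Wsp F m m1 m2 c i) ∨
       (∃ i : Fin m, T = Zsp F m m1 m2 c i) ∨
       T = H0sp F m m1 m2 c}


section Generic
variable {F : Type*} [Field F] {σ : Type*} [DecidableEq σ]

/-- exact coefficient formula for pderiv -/
theorem coeff_pderiv_aux (v : σ) (f : MvPolynomial σ F) (t : σ →₀ ℕ) :
    coeff t (pderiv v f) = ((t v : F) + 1) * coeff (t + Finsupp.single v 1) f := by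
  conv_lhs => rw [f.as_sum, map_sum]
  conv_rhs => rw [f.as_sum]
  rw [coeff_sum, coeff_sum, Finset.mul_sum]
  refine Finset.sum_congr rfl fun s _ => ?_
  rw [pderiv_monomial, coeff_monomial, coeff_monomial]
  rcases Nat.eq_zero_or_pos (s v) with hsv | hsv
  · have h1 : s ≠ t + Finsupp.single v 1 := by
      intro h
      have := DFunLike.congr_fun h v
      simp [Finsupp.single_apply, hsv] at this
    rw [if_neg h1, mul_zero]
    split_ifs with h2
    · simp [hsv]
    · rfl
  · have hiff : s - Finsupp.single v 1 = t ↔ s = t + Finsupp.single v 1 := by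
      constructor
      · intro h
        ext u
        have := DFunLike.congr_fun h u
        simp only [Finsupp.tsub_apply, Finsupp.single_apply, Finsupp.add_apply] at this ⊢
        rcases eq_or_ne v u with rfl | hu
        · rw [if_pos rfl] at this ⊢; omega
        · rw [if_neg hu] at this ⊢; omega

      · rintro rfl
        ext u
        simp only [Finsupp.tsub_apply, Finsupp.single_apply, Finsupp.add_apply]
        rcases eq_or_ne v u with rfl | hu
        · rw [if_pos rfl]; omega
        · rw [if_neg hu]; omega
    split_ifs with h1 h2 h2
    · -- s - single = t and s = t + single
      have htv : s v = t v + 1 := by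
        rw [h2]; simp [Finsupp.single_apply]
      rw [htv]; push_cast; ring
    · exact absurd (hiff.mp h1) h2
    · exact absurd (hiff.mpr h2) h1
    · rw [mul_zero]

theorem X_mul_monomial' (v : σ) (t : σ →₀ ℕ) (b : F) :
    X v * monomial t b = monomial (t + Finsupp.single v 1) b := by
  rw [X, monomial_mul, one_mul, add_comm]

theorem euler_mono (v : σ) (s : σ →₀ ℕ) (a : F) :
    X v * pderiv v (monomial s a) = (s v : F) • monomial s a := by
  rw [pderiv_monomial]
  rcases Nat.eq_zero_or_pos (s v) with hsv | hsv
  · simp [hsv]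
  · have h : (s - Finsupp.single v 1) + Finsupp.single v 1 = s := by
      ext u
      simp only [Finsupp.tsub_apply, Finsupp.single_apply, Finsupp.add_apply]
      rcases eq_or_ne v u with rfl | hu
      · rw [if_pos rfl]; omega
      · rw [if_neg hu]; omega
    rw [X_mul_monomial', h, smul_monomial, smul_eq_mul, mul_comm]

end Generic

section Chunk2
variable {F : Type*} [Field F] {σ : Type*} [DecidableEq σ]

theorem Finsupp_sub_add_single {s : σ →₀ ℕ} {v : σ} (h : s v ≠ 0) :
    (s - Finsupp.single v 1) + Finsupp.single v 1 = s := by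
  ext u
  simp only [Finsupp.tsub_apply, Finsupp.single_apply, Finsupp.add_apply]
  rcases eq_or_ne v u with rfl | hu
  · rw [if_pos rfl]; omega
  · rw [if_neg hu]; omega

theorem weight_single_one (w : σ → ℤ) (v : σ) :
    Finsupp.weight w (Finsupp.single v 1) = w v := by
  rw [Finsupp.weight_apply, Finsupp.sum_single_index] <;> simp

/-- x0-freeness -/
def XF (v0 : σ) (f : MvPolynomial σ F) : Prop := ∀ s, coeff s f ≠ 0 → s v0 = 0

theorem XF.zero (v0 : σ) : XF v0 (0 : MvPolynomial σ F) := by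
  intro s hs; simp at hs

theorem XF.pderiv_eq_zero {v0 : σ} {f : MvPolynomial σ F} (h : XF v0 f) :
    pderiv v0 f = 0 := by
  rw [eq_zero_iff]
  intro t
  rw [coeff_pderiv_aux]
  have : coeff (t + Finsupp.single v0 1) f = 0 := by
    by_contra hc
    have := h _ hc
    simp [Finsupp.single_apply] at this
  rw [this, mul_zero]

theorem XF.pderiv {v0 : σ} {f : MvPolynomial σ F} (h : XF v0 f) (v : σ) :
    XF v0 (pderiv v f) := by
  intro s hs
  rw [coeff_pderiv_aux] at hs
  have h2 : coeff (s + Finsupp.single v 1) f ≠ 0 := fun hc => hs (by rw [hc, mul_zero])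
  have := h _ h2
  simp only [Finsupp.add_apply, Finsupp.single_apply] at this
  omega

theorem XF.mulX {v0 : σ} {f : MvPolynomial σ F} (h : XF v0 f) {v : σ} (hv : v ≠ v0) :
    XF v0 (X v * f) := by
  intro s hs
  rw [coeff_X_mul'] at hs
  split_ifs at hs with hmem
  · have := h _ hs
    simp only [Finsupp.tsub_apply, Finsupp.single_apply, if_neg (fun hh : v = v0 => hv hh)] at this
    omega
  · exact absurd rfl hs

theorem XF.smul {v0 : σ} {f : MvPolynomial σ F} (h : XF v0 f) (a : F) :
    XF v0 (a • f) := by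
  intro s hs
  rw [coeff_smul] at hs
  exact h s fun hc => hs (by rw [hc, smul_zero])

theorem XF.neg {v0 : σ} {f : MvPolynomial σ F} (h : XF v0 f) : XF v0 (-f) := by
  intro s hs; rw [coeff_neg] at hs; exact h s (fun hc => hs (by rw [hc, neg_zero]))

/-- homogeneity shifts -/
theorem IsWH_pderiv {w : σ → ℤ} {f : MvPolynomial σ F} {n : ℤ}
    (hf : IsWeightedHomogeneous w f n) (v : σ) :
    IsWeightedHomogeneous w (pderiv v f) (n - w v) := by
  intro t ht
  rw [coeff_pderiv_aux] at ht
  have h2 : coeff (t + Finsupp.single v 1) f ≠ 0 := fun hc => ht (by rw [hc, mul_zero])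
  have h3 := hf h2
  rw [map_add, weight_single_one] at h3
  omega

theorem IsWH_mulX {w : σ → ℤ} {f : MvPolynomial σ F} {n : ℤ}
    (hf : IsWeightedHomogeneous w f n) (v : σ) :
    IsWeightedHomogeneous w (X v * f) (n + w v) := by
  have := (isWeightedHomogeneous_X F w v).mul hf
  rwa [add_comm] at this

theorem pderiv_ne_zero_aux [CharZero F] {f : MvPolynomial σ F} {s : σ →₀ ℕ}
    (hs : coeff s f ≠ 0) {v : σ} (hv : s v ≠ 0) : pderiv v f ≠ 0 := by
  rw [ne_zero_iff]
  refine ⟨s - Finsupp.single v 1, ?_⟩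
  rw [coeff_pderiv_aux, Finsupp_sub_add_single hv]
  have h1 : (s - Finsupp.single v 1 : σ →₀ ℕ) v = s v - 1 := by
    rw [Finsupp.tsub_apply, Finsupp.single_apply, if_pos rfl]
  rw [h1]
  have h2 : ((s v - 1 : ℕ) : F) + 1 = (s v : F) := by
    rw [Nat.cast_sub (by omega), Nat.cast_one]; ring
  rw [h2]
  exact mul_ne_zero (Nat.cast_ne_zero.mpr hv) hs

theorem totalDegree_pderiv_lt {f : MvPolynomial σ F} {s : σ →₀ ℕ}
    (hs : coeff s f ≠ 0) {v : σ} (hv : s v ≠ 0) :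
    (pderiv v f).totalDegree < f.totalDegree := by
  have hpos : 0 < f.totalDegree := by
    have h1 : (s.sum fun _ e => e) ≤ f.totalDegree :=
      le_totalDegree (MvPolynomial.mem_support_iff.mpr hs)
    have h2 : s v ≤ s.sum fun _ e => e := by
      rw [Finsupp.sum]
      exact Finset.single_le_sum (fun u _ => Nat.zero_le _)
        (Finsupp.mem_support_iff.mpr hv)
    omega
  rw [totalDegree, Finset.sup_lt_iff (by exact hpos)]
  intro t ht
  rw [MvPolynomial.mem_support_iff, coeff_pderiv_aux] at ht
  have h2 : coeff (t + Finsupp.single v 1) f ≠ 0 := fun hc => ht (by rw [hc, mul_zero])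
  have h3 : ((t + Finsupp.single v 1).sum fun _ e => e) ≤ f.totalDegree :=
    le_totalDegree (MvPolynomial.mem_support_iff.mpr h2)
  have h4 : ((t + Finsupp.single v 1).sum fun _ e => e) = (t.sum fun _ e => e) + 1 := by
    rw [Finsupp.sum_add_index' (fun _ => rfl) (fun _ _ _ => rfl), Finsupp.sum_single_index rfl]
  omega

theorem supX_pderiv_lt [CharZero F] {f : MvPolynomial σ F} {v0 : σ} (h : ¬ XF v0 f) :
    (pderiv v0 f).support.sup (fun s => s v0) < f.support.sup (fun s => s v0) := by
  simp only [XF, not_forall] at h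
  obtain ⟨s, hs, hv⟩ := h
  have hpos : 0 < f.support.sup (fun s => s v0) := by
    have h0 : s v0 ≤ f.support.sup (fun s => s v0) :=
      Finset.le_sup (f := fun s : σ →₀ ℕ => s v0) (MvPolynomial.mem_support_iff.mpr hs)
    omega
  rw [Finset.sup_lt_iff (by exact hpos)]
  intro t ht
  rw [MvPolynomial.mem_support_iff, coeff_pderiv_aux] at ht
  have h2 : coeff (t + Finsupp.single v0 1) f ≠ 0 := fun hc => ht (by rw [hc, mul_zero])
  have h3 : (t + Finsupp.single v0 1 : σ →₀ ℕ) v0 ≤ f.support.sup (fun s => s v0) :=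
    Finset.le_sup (f := fun s : σ →₀ ℕ => s v0) (MvPolynomial.mem_support_iff.mpr h2)
  rw [Finsupp.add_apply, Finsupp.single_apply, if_pos rfl] at h3
  omega

end Chunk2

section Chunk3
variable {F : Type*} [Field F] {m m1 m2 : ℕ}

/-- the `D̃`-weight of each variable -/
def wDm (m m1 m2 : ℕ) : SpIdx m → ℤ
  | .inl j => if (j : ℕ) = 0 then 1 else if (j : ℕ) ≤ m1 then -1 else 1
  | .inr i => if (i : ℕ) < m2 then 1 else -1

/-- the `H_0`-weight of each variable -/
def wHm (m m1 m2 : ℕ) (v : SpIdx m) : ℤ :=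
  wDm m m1 m2 v + (if v = Sum.inl 0 then 1 else 0)

theorem wDm_inl0 : wDm m m1 m2 (Sum.inl 0) = 1 := by
  simp [wDm]

theorem wDm_succ (i : Fin m) :
    wDm m m1 m2 (Sum.inl i.succ) = if (i : ℕ) < m1 then -1 else 1 := by
  show (if ((i:ℕ)+1 : ℕ) = 0 then 1 else if ((i:ℕ)+1 : ℕ) ≤ m1 then -1 else 1) = _
  rw [if_neg (by omega), if_congr (show ((i:ℕ)+1 ≤ m1) ↔ ((i:ℕ) < m1) by omega) rfl rfl]

theorem wDm_inr (i : Fin m) :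
    wDm m m1 m2 (Sum.inr i) = if (i : ℕ) < m2 then 1 else -1 := rfl

theorem weight_eq_split (s : SpIdx m →₀ ℕ) :
    Finsupp.weight (wDm m m1 m2) s =
      (s (Sum.inl 0) : ℤ) * wDm m m1 m2 (Sum.inl 0) +
      (∑ i : Fin m, (s (Sum.inl i.succ) : ℤ) * wDm m m1 m2 (Sum.inl i.succ)) +
      (∑ i : Fin m, (s (Sum.inr i) : ℤ) * wDm m m1 m2 (Sum.inr i)) := by
  rw [Finsupp.weight_apply]
  rw [Finsupp.sum_fintype s (fun i c => c • wDm m m1 m2 i) (fun i => zero_smul ℕ _)]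
  rw [Fintype.sum_sum_type, Fin.sum_univ_succ]
  simp only [nsmul_eq_mul]
  try ring

theorem weightH_eq (s : SpIdx m →₀ ℕ) :
    Finsupp.weight (wHm m m1 m2) s =
      Finsupp.weight (wDm m m1 m2) s + (s (Sum.inl 0) : ℤ) := by
  rw [Finsupp.weight_apply, Finsupp.weight_apply,
    Finsupp.sum_fintype s (fun i c => c • wHm m m1 m2 i) (fun i => zero_smul ℕ _),
    Finsupp.sum_fintype s (fun i c => c • wDm m m1 m2 i) (fun i => zero_smul ℕ _)]
  unfold wHm
  simp only [smul_add, Finset.sum_add_distrib]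
  congr 1
  have hv : ∀ v : SpIdx m, (s v) • (if v = Sum.inl 0 then (1:ℤ) else 0)
      = (if v = Sum.inl 0 then (s v : ℤ) else 0) := by
    intro v; split_ifs <;> simp
  rw [Finset.sum_congr rfl (fun v _ => hv v),
    Finset.sum_ite_eq' Finset.univ (Sum.inl 0 : SpIdx m) (fun v => ((s v : ℤ)))]
  simp

theorem mxdx_apply (i : Fin (m+1)) (f : MvPolynomial (SpIdx m) F) :
    (mx F m i * dx F m i) f = X (Sum.inl i) * pderiv (Sum.inl i) f := by
  rw [Module.End.mul_apply, mx, dx, LinearMap.mulLeft_apply]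
  rfl

theorem mydy_apply (i : Fin m) (f : MvPolynomial (SpIdx m) F) :
    (my F m i * dy F m i) f = X (Sum.inr i) * pderiv (Sum.inr i) f := by
  rw [Module.End.mul_apply, my, dy, LinearMap.mulLeft_apply]
  rfl

theorem DtSp_monomial (s : SpIdx m →₀ ℕ) (a : F) :
    DtSp F m m1 m2 (monomial s a) =
      ((Finsupp.weight (wDm m m1 m2) s : ℤ) : F) • monomial s a := by
  set μ := (monomial s a : MvPolynomial (SpIdx m) F) with hμ
  rw [DtSp, LinearMap.add_apply, LinearMap.add_apply, LinearMap.sum_apply, LinearMap.sum_apply]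
  have h0 : (mx F m 0 * dx F m 0) μ
      = (((s (Sum.inl 0) : ℤ) * wDm m m1 m2 (Sum.inl 0) : ℤ) : F) • μ := by
    rw [mxdx_apply, hμ, euler_mono, wDm_inl0, mul_one]
    norm_cast
  have hx : ∀ i : Fin m,
      (if (i:ℕ) < m1 then -(mx F m i.succ * dx F m i.succ) else mx F m i.succ * dx F m i.succ) μ
      = (((s (Sum.inl i.succ) : ℤ) * wDm m m1 m2 (Sum.inl i.succ) : ℤ) : F) • μ := by
    intro i
    rw [wDm_succ]
    split_ifs with h
    · rw [LinearMap.neg_apply, mxdx_apply, hμ, euler_mono]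
      push_cast
      rw [← neg_smul]
      ring_nf
    · rw [mxdx_apply, hμ, euler_mono]
      push_cast
      ring_nf
  have hy : ∀ i : Fin m,
      (if (i:ℕ) < m2 then my F m i * dy F m i else -(my F m i * dy F m i)) μ
      = (((s (Sum.inr i) : ℤ) * wDm m m1 m2 (Sum.inr i) : ℤ) : F) • μ := by
    intro i
    rw [wDm_inr]
    split_ifs with h
    · rw [mydy_apply, hμ, euler_mono]
      push_cast
      ring_nf
    · rw [LinearMap.neg_apply, mydy_apply, hμ, euler_mono]
      push_cast
      rw [← neg_smul]
      ring_nf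
  rw [h0, Finset.sum_congr rfl (fun i _ => hx i), Finset.sum_congr rfl (fun i _ => hy i),
    ← Finset.sum_smul, ← Finset.sum_smul, ← add_smul, ← add_smul, weight_eq_split]
  push_cast
  ring_nf

theorem DtSp_homog {f : MvPolynomial (SpIdx m) F} {n : ℤ}
    (hf : IsWeightedHomogeneous (wDm m m1 m2) f n) :
    DtSp F m m1 m2 f = ((n : ℤ) : F) • f := by
  conv_lhs => rw [f.as_sum, map_sum]
  conv_rhs => rw [f.as_sum, Finset.smul_sum]
  refine Finset.sum_congr rfl fun s hs => ?_
  rw [DtSp_monomial, hf (MvPolynomial.mem_support_iff.mp hs)]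

theorem H0_monomial (c : F) (s : SpIdx m →₀ ℕ) (a : F) :
    H0sp F m m1 m2 c (monomial s a) =
      (ct F m m1 m2 c + ((Finsupp.weight (wHm m m1 m2) s : ℤ) : F)) • monomial s a := by
  rw [H0sp, LinearMap.add_apply, LinearMap.add_apply, DtSp_monomial, mxdx_apply, euler_mono,
    LinearMap.smul_apply, Module.End.one_apply, weightH_eq]
  rw [← add_smul, ← add_smul]
  congr 1
  push_cast
  ring

theorem coeff_H0 (c : F) (f : MvPolynomial (SpIdx m) F) (s : SpIdx m →₀ ℕ) :
    coeff s (H0sp F m m1 m2 c f) =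
      (ct F m m1 m2 c + ((Finsupp.weight (wHm m m1 m2) s : ℤ) : F)) * coeff s f := by
  conv_lhs => rw [f.as_sum, map_sum]
  conv_rhs => rw [f.as_sum]
  rw [coeff_sum, coeff_sum, Finset.mul_sum]
  refine Finset.sum_congr rfl fun t _ => ?_
  rw [H0_monomial, coeff_smul, coeff_monomial, smul_eq_mul]
  rcases eq_or_ne t s with rfl | ht
  · rfl
  · rw [if_neg ht, mul_zero, mul_zero]

end Chunk3

section Chunk4
variable {F : Type*} [Field F] [CharZero F] {m m1 m2 : ℕ}
  {W : Submodule F (MvPolynomial (SpIdx m) F)} {c : F}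

theorem spectral (hW : ∀ f ∈ W, H0sp F m m1 m2 c f ∈ W) :
    ∀ f ∈ W, ∀ n : ℤ, weightedHomogeneousComponent (wHm m m1 m2) n f ∈ W := by
  suffices key : ∀ N : ℕ, ∀ f ∈ W,
      (f.support.image fun s => Finsupp.weight (wHm m m1 m2) s).card ≤ N →
      ∀ n : ℤ, weightedHomogeneousComponent (wHm m m1 m2) n f ∈ W by
    exact fun f hf n => key _ f hf le_rfl n
  intro N
  induction N with
  | zero =>
    intro f hf hcard n
    have h0 : f.support.image (fun s => Finsupp.weight (wHm m m1 m2) s) = ∅ :=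
      Finset.card_eq_zero.mp (Nat.le_zero.mp hcard)
    have hs : f.support = ∅ := Finset.image_eq_empty.mp h0
    have hf0 : f = 0 := support_eq_empty.mp hs
    rw [hf0, map_zero]; exact W.zero_mem
  | succ N ih =>
    intro f hf hcard n
    by_cases hz : weightedHomogeneousComponent (wHm m m1 m2) n f = 0
    · rw [hz]; exact W.zero_mem
    by_cases hone : (f.support.image fun s => Finsupp.weight (wHm m m1 m2) s) ⊆ {n}
    · have heq : weightedHomogeneousComponent (wHm m m1 m2) n f = f := by
        ext t
        rw [coeff_weightedHomogeneousComponent]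
        split_ifs with h
        · rfl
        · symm; by_contra hcne
          have ht : t ∈ f.support := MvPolynomial.mem_support_iff.mpr hcne
          exact h (Finset.mem_singleton.mp (hone (Finset.mem_image_of_mem _ ht)))
      rw [heq]; exact hf
    · obtain ⟨n0, hn0mem, hn0ne⟩ :
          ∃ n0 ∈ f.support.image (fun s => Finsupp.weight (wHm m m1 m2) s), n0 ≠ n := by
        by_contra hno
        push_neg at hno
        exact hone (fun x hx => Finset.mem_singleton.mpr (hno x hx))
      set g := H0sp F m m1 m2 c f - (ct F m m1 m2 c + (n0 : F)) • f with hg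
      have hgW : g ∈ W := W.sub_mem (hW f hf) (W.smul_mem _ hf)
      have hcg : ∀ t, coeff t g =
          ((Finsupp.weight (wHm m m1 m2) t - n0 : ℤ) : F) * coeff t f := by
        intro t
        rw [hg, coeff_sub, coeff_smul, coeff_H0, smul_eq_mul]
        push_cast
        ring
      have himg : (g.support.image fun s => Finsupp.weight (wHm m m1 m2) s)
          ⊆ (f.support.image fun s => Finsupp.weight (wHm m m1 m2) s).erase n0 := by
        intro x hx
        obtain ⟨t, ht, rfl⟩ := Finset.mem_image.mp hx
        have htg : coeff t g ≠ 0 := MvPolynomial.mem_support_iff.mp ht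
        rw [hcg] at htg
        have h1 : coeff t f ≠ 0 := fun h => htg (by rw [h, mul_zero])
        have h2 : Finsupp.weight (wHm m m1 m2) t ≠ n0 := by
          intro h
          apply htg
          rw [h]
          simp
        exact Finset.mem_erase.mpr
          ⟨h2, Finset.mem_image_of_mem _ (MvPolynomial.mem_support_iff.mpr h1)⟩
      have hcardg : (g.support.image fun s => Finsupp.weight (wHm m m1 m2) s).card ≤ N := by
        have h1 := Finset.card_le_card himg
        rw [Finset.card_erase_of_mem hn0mem] at h1
        have h2 : 1 ≤ (f.support.image fun s => Finsupp.weight (wHm m m1 m2) s).card :=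
          Finset.card_pos.mpr ⟨n0, hn0mem⟩
        omega
      have hcomp := ih g hgW hcardg n
      have heq2 : weightedHomogeneousComponent (wHm m m1 m2) n g
          = ((n - n0 : ℤ) : F) • weightedHomogeneousComponent (wHm m m1 m2) n f := by
        ext t
        rw [coeff_smul, coeff_weightedHomogeneousComponent, coeff_weightedHomogeneousComponent]
        split_ifs with h
        · rw [hcg, h, smul_eq_mul]
        · rw [smul_zero]
      have hne : ((n - n0 : ℤ) : F) ≠ 0 := by
        rw [Int.cast_ne_zero]
        omega
      have hfin : weightedHomogeneousComponent (wHm m m1 m2) n f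
          = ((n - n0 : ℤ) : F)⁻¹ • weightedHomogeneousComponent (wHm m m1 m2) n g := by
        rw [heq2, smul_smul, inv_mul_cancel₀ hne, one_smul]
      rw [hfin]
      exact W.smul_mem _ hcomp

theorem comp_XF {f : MvPolynomial (SpIdx m) F} (h : XF (Sum.inl 0 : SpIdx m) f) (n : ℤ) :
    XF (Sum.inl 0 : SpIdx m) (weightedHomogeneousComponent (wHm m m1 m2) n f) := by
  intro t ht
  rw [coeff_weightedHomogeneousComponent] at ht
  split_ifs at ht with hc0
  · exact h t ht
  · exact absurd rfl ht

theorem exists_comp_ne_zero {f : MvPolynomial (SpIdx m) F} (h : f ≠ 0) :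
    ∃ n, weightedHomogeneousComponent (wHm m m1 m2) n f ≠ 0 := by
  obtain ⟨t, ht⟩ := ne_zero_iff.mp h
  refine ⟨Finsupp.weight (wHm m m1 m2) t, fun h0 => ht ?_⟩
  have h1 := congrArg (coeff t) h0
  rwa [coeff_weightedHomogeneousComponent, if_pos rfl, coeff_zero] at h1

theorem homog_wH_to_wD {f : MvPolynomial (SpIdx m) F} {n : ℤ}
    (hx : XF (Sum.inl 0 : SpIdx m) f) (hf : IsWeightedHomogeneous (wHm m m1 m2) f n) :
    IsWeightedHomogeneous (wDm m m1 m2) f n := by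
  intro t ht
  have h1 := hf ht
  have h2 := hx t ht
  rw [weightH_eq, h2] at h1
  simpa using h1

end Chunk4

section Chunk5

theorem solve_pos {F M : Type*} [Field F] [AddCommGroup M] [Module F M] {s : F} (hs : s ≠ 0)
    {T A B : M} (h : B = A + s • T) : T = s⁻¹ • (B - A) := by
  rw [h, add_sub_cancel_left, smul_smul, inv_mul_cancel₀ hs, one_smul]

theorem solve_neg {F M : Type*} [Field F] [AddCommGroup M] [Module F M] {s : F} (hs : s ≠ 0)
    {T A B : M} (h : B = A - s • T) : T = s⁻¹ • (A - B) := by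
  rw [h]
  rw [sub_sub_cancel, smul_smul, inv_mul_cancel₀ hs, one_smul]

variable {F : Type*} [Field F] [CharZero F] {m m1 m2 : ℕ}
  {W : Submodule F (MvPolynomial (SpIdx m) F)} {c : F}

theorem Usp_memFam : Usp F m ∈ FamT F m m1 m2 c :=
  Or.inr (Or.inr (Or.inr (Or.inl rfl)))
theorem Vsp_memFam : Vsp F m m1 m2 c ∈ FamT F m m1 m2 c :=
  Or.inr (Or.inr (Or.inr (Or.inr (Or.inl rfl))))
theorem Rsp_memFam (i : Fin m) : Rsp F m m1 m2 i ∈ FamT F m m1 m2 c :=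
  Or.inr (Or.inr (Or.inr (Or.inr (Or.inr (Or.inl ⟨i, rfl⟩)))))
theorem Ssp_memFam (i : Fin m) : Ssp F m m1 m2 i ∈ FamT F m m1 m2 c :=
  Or.inr (Or.inr (Or.inr (Or.inr (Or.inr (Or.inr (Or.inl ⟨i, rfl⟩))))))
theorem Wsp_memFam (i : Fin m) : Wsp F m m1 m2 c i ∈ FamT F m m1 m2 c :=
  Or.inr (Or.inr (Or.inr (Or.inr (Or.inr (Or.inr (Or.inr (Or.inl ⟨i, rfl⟩)))))))
theorem Zsp_memFam (i : Fin m) : Zsp F m m1 m2 c i ∈ FamT F m m1 m2 c :=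
  Or.inr (Or.inr (Or.inr (Or.inr (Or.inr (Or.inr (Or.inr (Or.inr (Or.inl ⟨i, rfl⟩))))))))
theorem H0sp_memFam : H0sp F m m1 m2 c ∈ FamT F m m1 m2 c :=
  Or.inr (Or.inr (Or.inr (Or.inr (Or.inr (Or.inr (Or.inr (Or.inr (Or.inr rfl))))))))

theorem mx_apply (i : Fin (m+1)) (f : MvPolynomial (SpIdx m) F) :
    mx F m i f = X (Sum.inl i) * f := by rw [mx, LinearMap.mulLeft_apply]
theorem my_apply (i : Fin m) (f : MvPolynomial (SpIdx m) F) :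
    my F m i f = X (Sum.inr i) * f := by rw [my, LinearMap.mulLeft_apply]
theorem dx_apply (i : Fin (m+1)) (f : MvPolynomial (SpIdx m) F) :
    dx F m i f = pderiv (Sum.inl i) f := rfl
theorem dy_apply (i : Fin m) (f : MvPolynomial (SpIdx m) F) :
    dy F m i f = pderiv (Sum.inr i) f := rfl

theorem hct_aux (hc : ∀ k : ℤ, c ≠ (k : F)) (n : ℤ) :
    ct F m m1 m2 c + (n : F) ≠ 0 := by
  intro h
  rw [ct] at h
  refine hc ((m1 : ℤ) + m - m2 - n) ?_
  push_cast
  linear_combination h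

theorem E_apply {f : MvPolynomial (SpIdx m) F} {n : ℤ}
    (hh : IsWeightedHomogeneous (wDm m m1 m2) f n) :
    (DtSp F m m1 m2 + ct F m m1 m2 c • 1) f = (ct F m m1 m2 c + (n : F)) • f := by
  rw [LinearMap.add_apply, LinearMap.smul_apply, Module.End.one_apply, DtSp_homog hh,
    ← add_smul, add_comm]

theorem E1_apply {f : MvPolynomial (SpIdx m) F} {n : ℤ}
    (hh : IsWeightedHomogeneous (wDm m m1 m2) f n) :
    (DtSp F m m1 m2 + (ct F m m1 m2 c - 1) • 1) f
      = (ct F m m1 m2 c + ((n : F) - 1)) • f := by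
  rw [LinearMap.add_apply, LinearMap.smul_apply, Module.End.one_apply, DtSp_homog hh,
    ← add_smul]
  congr 1
  ring

/-- homogeneity degree computations, packaged -/
theorem hom_d {i : Fin m} {f : MvPolynomial (SpIdx m) F} {n : ℤ}
    (hh : IsWeightedHomogeneous (wDm m m1 m2) f n) :
    IsWeightedHomogeneous (wDm m m1 m2) (pderiv (Sum.inl i.succ) f)
      (if (i : ℕ) < m1 then n + 1 else n - 1) := by
  have h := IsWH_pderiv hh (Sum.inl i.succ)
  rw [wDm_succ] at h
  split_ifs with h1
  · rw [if_pos h1] at h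
    rwa [show n - (-1) = n + 1 by ring] at h
  · rwa [if_neg h1] at h

theorem hom_e {i : Fin m} {f : MvPolynomial (SpIdx m) F} {n : ℤ}
    (hh : IsWeightedHomogeneous (wDm m m1 m2) f n) :
    IsWeightedHomogeneous (wDm m m1 m2) (pderiv (Sum.inr i) f)
      (if (i : ℕ) < m2 then n - 1 else n + 1) := by
  have h := IsWH_pderiv hh (Sum.inr i)
  rw [wDm_inr] at h
  split_ifs with h1
  · rwa [if_pos h1] at h
  · rw [if_neg h1] at h
    rwa [show n - (-1) = n + 1 by ring] at h

theorem hom_x {i : Fin m} {f : MvPolynomial (SpIdx m) F} {n : ℤ}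
    (hh : IsWeightedHomogeneous (wDm m m1 m2) f n) :
    IsWeightedHomogeneous (wDm m m1 m2) (X (Sum.inl i.succ) * f)
      (if (i : ℕ) < m1 then n - 1 else n + 1) := by
  have h := IsWH_mulX hh (Sum.inl i.succ)
  rw [wDm_succ] at h
  split_ifs with h1
  · rw [if_pos h1] at h
    rwa [show n + (-1) = n - 1 by ring] at h
  · rwa [if_neg h1] at h

theorem hom_y {i : Fin m} {f : MvPolynomial (SpIdx m) F} {n : ℤ}
    (hh : IsWeightedHomogeneous (wDm m m1 m2) f n) :
    IsWeightedHomogeneous (wDm m m1 m2) (X (Sum.inr i) * f)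
      (if (i : ℕ) < m2 then n + 1 else n - 1) := by
  have h := IsWH_mulX hh (Sum.inr i)
  rw [wDm_inr] at h
  split_ifs with h1
  · rwa [if_pos h1] at h
  · rw [if_neg h1] at h
    rwa [show n + (-1) = n - 1 by ring] at h

section Ops
variable (hAll : ∀ T ∈ FamT F m m1 m2 c, ∀ f ∈ W, T f ∈ W)
    (hc : ∀ k : ℤ, c ≠ (k : F)) (h12 : m1 ≤ m2)

include hAll hc

theorem mulX0_mem {f : MvPolynomial (SpIdx m) F} {n : ℤ} (hf : f ∈ W)
    (hh : IsWeightedHomogeneous (wDm m m1 m2) f n) :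
    X (Sum.inl 0) * f ∈ W := by
  have hVf := hAll _ Vsp_memFam f hf
  have h1 : Vsp F m m1 m2 c f = (ct F m m1 m2 c + (n : F)) • (X (Sum.inl 0) * f) := by
    rw [Vsp, Module.End.mul_apply, E_apply hh, mx_apply, mul_smul_comm]
  have heq : X (Sum.inl 0) * f
      = (ct F m m1 m2 c + (n : F))⁻¹ • Vsp F m m1 m2 c f := by
    rw [h1, smul_smul, inv_mul_cancel₀ (hct_aux hc n), one_smul]
  rw [heq]
  exact W.smul_mem _ hVf

-- ===== Block A : (i:ℕ) < m1 =====
omit hc in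
theorem eA_mem {i : Fin m} (hi : (i : ℕ) < m1) {f : MvPolynomial (SpIdx m) F}
    (hf : f ∈ W) (hx : XF (Sum.inl 0 : SpIdx m) f) :
    pderiv (Sum.inr i) f ∈ W := by
  have hRf := hAll _ (Rsp_memFam i) f hf
  have h1 : Rsp F m m1 m2 i f = pderiv (Sum.inr i) f := by
    rw [Rsp, if_pos hi, LinearMap.add_apply, Module.End.mul_apply, dx_apply, dx_apply, dy_apply,
      (hx.pderiv (Sum.inl i.succ)).pderiv_eq_zero, zero_add]
  rwa [h1] at hRf

omit hc in
theorem xA_mem {i : Fin m} (hi : (i : ℕ) < m1) {f : MvPolynomial (SpIdx m) F}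
    (hf : f ∈ W) (hx : XF (Sum.inl 0 : SpIdx m) f) :
    X (Sum.inl i.succ) * f ∈ W := by
  have hSf := hAll _ (Ssp_memFam i) f hf
  have h1 : Ssp F m m1 m2 i f = X (Sum.inl i.succ) * f := by
    rw [Ssp, if_pos hi, LinearMap.add_apply, Module.End.mul_apply, my_apply, mx_apply, dx_apply,
      hx.pderiv_eq_zero, mul_zero, zero_add]
  rwa [h1] at hSf

include h12 in
theorem dA_mem {i : Fin m} (hi : (i : ℕ) < m1) {f : MvPolynomial (SpIdx m) F}
    {n : ℤ} (hf : f ∈ W) (hx : XF (Sum.inl 0 : SpIdx m) f)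
    (hh : IsWeightedHomogeneous (wDm m m1 m2) f n) :
    pderiv (Sum.inl i.succ) f ∈ W := by
  have heW : pderiv (Sum.inr i) f ∈ W := eA_mem hAll hi hf hx
  have hehom : IsWeightedHomogeneous (wDm m m1 m2) (pderiv (Sum.inr i) f) (n - 1) := by
    have h := hom_e hh (i := i)
    rwa [if_pos (lt_of_lt_of_le hi h12)] at h
  have hdhom : IsWeightedHomogeneous (wDm m m1 m2) (pderiv (Sum.inl i.succ) f) (n + 1) := by
    have h := hom_d hh (i := i)
    rwa [if_pos hi] at h
  have hZf := hAll _ (Zsp_memFam i) f hf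
  have h1 : Zsp F m m1 m2 c i f = X (Sum.inl 0) * pderiv (Sum.inr i) f
      + (ct F m m1 m2 c + (n : F)) • pderiv (Sum.inl i.succ) f := by
    rw [Zsp, if_pos hi, LinearMap.add_apply, Module.End.mul_apply, Module.End.mul_apply,
      mx_apply, dy_apply, dx_apply, E1_apply hdhom]
    congr 2
    push_cast
    ring
  rw [solve_pos (hct_aux hc n) h1]
  exact W.smul_mem _ (W.sub_mem hZf (mulX0_mem hAll hc heW hehom))

theorem yA_mem {i : Fin m} (hi : (i : ℕ) < m1) {f : MvPolynomial (SpIdx m) F}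
    {n : ℤ} (hf : f ∈ W) (hx : XF (Sum.inl 0 : SpIdx m) f)
    (hh : IsWeightedHomogeneous (wDm m m1 m2) f n) :
    X (Sum.inr i) * f ∈ W := by
  have hxW : X (Sum.inl i.succ) * f ∈ W := xA_mem hAll hi hf hx
  have hxhom : IsWeightedHomogeneous (wDm m m1 m2) (X (Sum.inl i.succ) * f) (n - 1) := by
    have h := hom_x hh (i := i)
    rwa [if_pos hi] at h
  have hWf := hAll _ (Wsp_memFam i) f hf
  have h1 : Wsp F m m1 m2 c i f = -(X (Sum.inl 0) * (X (Sum.inl i.succ) * f))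
      - (ct F m m1 m2 c + (n : F)) • (X (Sum.inr i) * f) := by
    rw [Wsp, if_pos hi, LinearMap.sub_apply, LinearMap.neg_apply, Module.End.mul_apply,
      Module.End.mul_apply, mx_apply, mx_apply, my_apply, E_apply hh, mul_smul_comm]
  rw [solve_neg (hct_aux hc n) h1]
  exact W.smul_mem _ (W.sub_mem (W.neg_mem (mulX0_mem hAll hc hxW hxhom)) hWf)

-- ===== Block B : m1 ≤ i < m2 =====
omit hc in
theorem eB_mem {i : Fin m} (hi1 : ¬ (i : ℕ) < m1) (hi2 : (i : ℕ) < m2)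
    {f : MvPolynomial (SpIdx m) F} (hf : f ∈ W) (hx : XF (Sum.inl 0 : SpIdx m) f) :
    pderiv (Sum.inr i) f ∈ W := by
  have hRf := hAll _ (Rsp_memFam i) f hf
  have h1 : Rsp F m m1 m2 i f = pderiv (Sum.inr i) f := by
    rw [Rsp, if_neg hi1, if_pos hi2, LinearMap.add_apply, Module.End.mul_apply, mx_apply,
      dx_apply, dy_apply, hx.pderiv_eq_zero, mul_zero, zero_add]
  rwa [h1] at hRf

omit hc in
theorem dB_mem {i : Fin m} (hi1 : ¬ (i : ℕ) < m1) (hi2 : (i : ℕ) < m2)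
    {f : MvPolynomial (SpIdx m) F} (hf : f ∈ W) (hx : XF (Sum.inl 0 : SpIdx m) f) :
    pderiv (Sum.inl i.succ) f ∈ W := by
  have hSf := hAll _ (Ssp_memFam i) f hf
  have h1 : Ssp F m m1 m2 i f = -(pderiv (Sum.inl i.succ) f) := by
    rw [Ssp, if_neg hi1, if_pos hi2, LinearMap.sub_apply, Module.End.mul_apply, my_apply,
      dx_apply, dx_apply, hx.pderiv_eq_zero, mul_zero, zero_sub]
  have := W.neg_mem hSf
  rwa [h1, neg_neg] at this

theorem xB_mem {i : Fin m} (hi1 : ¬ (i : ℕ) < m1) (hi2 : (i : ℕ) < m2)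
    {f : MvPolynomial (SpIdx m) F} {n : ℤ} (hf : f ∈ W) (hx : XF (Sum.inl 0 : SpIdx m) f)
    (hh : IsWeightedHomogeneous (wDm m m1 m2) f n) :
    X (Sum.inl i.succ) * f ∈ W := by
  have heW : pderiv (Sum.inr i) f ∈ W := eB_mem hAll hi1 hi2 hf hx
  have hehom : IsWeightedHomogeneous (wDm m m1 m2) (pderiv (Sum.inr i) f) (n - 1) := by
    have h := hom_e hh (i := i)
    rwa [if_pos hi2] at h
  have hZf := hAll _ (Zsp_memFam i) f hf
  have h1 : Zsp F m m1 m2 c i f = X (Sum.inl 0) * pderiv (Sum.inr i) f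
      + (ct F m m1 m2 c + (n : F)) • (X (Sum.inl i.succ) * f) := by
    rw [Zsp, if_neg hi1, if_pos hi2, LinearMap.add_apply, Module.End.mul_apply,
      Module.End.mul_apply, mx_apply, dy_apply, E_apply hh, mx_apply, mul_smul_comm]
  rw [solve_pos (hct_aux hc n) h1]
  exact W.smul_mem _ (W.sub_mem hZf (mulX0_mem hAll hc heW hehom))

theorem yB_mem {i : Fin m} (hi1 : ¬ (i : ℕ) < m1) (hi2 : (i : ℕ) < m2)
    {f : MvPolynomial (SpIdx m) F} {n : ℤ} (hf : f ∈ W) (hx : XF (Sum.inl 0 : SpIdx m) f)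
    (hh : IsWeightedHomogeneous (wDm m m1 m2) f n) :
    X (Sum.inr i) * f ∈ W := by
  have hdW : pderiv (Sum.inl i.succ) f ∈ W := dB_mem hAll hi1 hi2 hf hx
  have hdhom : IsWeightedHomogeneous (wDm m m1 m2) (pderiv (Sum.inl i.succ) f) (n - 1) := by
    have h := hom_d hh (i := i)
    rwa [if_neg hi1] at h
  have hWf := hAll _ (Wsp_memFam i) f hf
  have h1 : Wsp F m m1 m2 c i f = X (Sum.inl 0) * pderiv (Sum.inl i.succ) f
      - (ct F m m1 m2 c + (n : F)) • (X (Sum.inr i) * f) := by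
    rw [Wsp, if_neg hi1, if_pos hi2, LinearMap.sub_apply, Module.End.mul_apply,
      Module.End.mul_apply, mx_apply, dx_apply, my_apply, E_apply hh, mul_smul_comm]
  rw [solve_neg (hct_aux hc n) h1]
  exact W.smul_mem _ (W.sub_mem (mulX0_mem hAll hc hdW hdhom) hWf)

-- ===== Block C : m2 ≤ i =====
omit hc in
include h12 in
theorem yC_mem {i : Fin m} (hi2 : ¬ (i : ℕ) < m2)
    {f : MvPolynomial (SpIdx m) F} (hf : f ∈ W) (hx : XF (Sum.inl 0 : SpIdx m) f) :
    X (Sum.inr i) * f ∈ W := by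
  have hi1 : ¬ (i : ℕ) < m1 := fun h => hi2 (lt_of_lt_of_le h h12)
  have hRf := hAll _ (Rsp_memFam i) f hf
  have h1 : Rsp F m m1 m2 i f = -(X (Sum.inr i) * f) := by
    rw [Rsp, if_neg hi1, if_neg hi2, LinearMap.sub_apply, Module.End.mul_apply, mx_apply,
      dx_apply, my_apply, hx.pderiv_eq_zero, mul_zero, zero_sub]
  have := W.neg_mem hRf
  rwa [h1, neg_neg] at this

omit hc in
include h12 in
theorem dC_mem {i : Fin m} (hi2 : ¬ (i : ℕ) < m2)
    {f : MvPolynomial (SpIdx m) F} (hf : f ∈ W) (hx : XF (Sum.inl 0 : SpIdx m) f) :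
    pderiv (Sum.inl i.succ) f ∈ W := by
  have hi1 : ¬ (i : ℕ) < m1 := fun h => hi2 (lt_of_lt_of_le h h12)
  have hSf := hAll _ (Ssp_memFam i) f hf
  have h1 : Ssp F m m1 m2 i f = -(pderiv (Sum.inl i.succ) f) := by
    rw [Ssp, if_neg hi1, if_neg hi2, LinearMap.sub_apply, Module.End.mul_apply, dx_apply,
      dy_apply, dx_apply, (hx.pderiv (Sum.inr i)).pderiv_eq_zero, zero_sub]
  have := W.neg_mem hSf
  rwa [h1, neg_neg] at this

include h12 in
theorem eC_mem {i : Fin m} (hi2 : ¬ (i : ℕ) < m2)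
    {f : MvPolynomial (SpIdx m) F} {n : ℤ} (hf : f ∈ W) (hx : XF (Sum.inl 0 : SpIdx m) f)
    (hh : IsWeightedHomogeneous (wDm m m1 m2) f n) :
    pderiv (Sum.inr i) f ∈ W := by
  have hi1 : ¬ (i : ℕ) < m1 := fun h => hi2 (lt_of_lt_of_le h h12)
  have hdW : pderiv (Sum.inl i.succ) f ∈ W := dC_mem hAll h12 hi2 hf hx
  have hdhom : IsWeightedHomogeneous (wDm m m1 m2) (pderiv (Sum.inl i.succ) f) (n - 1) := by
    have h := hom_d hh (i := i)
    rwa [if_neg hi1] at h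
  have hehom : IsWeightedHomogeneous (wDm m m1 m2) (pderiv (Sum.inr i) f) (n + 1) := by
    have h := hom_e hh (i := i)
    rwa [if_neg hi2] at h
  have hWf := hAll _ (Wsp_memFam i) f hf
  have h1 : Wsp F m m1 m2 c i f = X (Sum.inl 0) * pderiv (Sum.inl i.succ) f
      - (ct F m m1 m2 c + (n : F)) • pderiv (Sum.inr i) f := by
    rw [Wsp, if_neg hi1, if_neg hi2, LinearMap.sub_apply, Module.End.mul_apply,
      Module.End.mul_apply, mx_apply, dx_apply, dy_apply, E1_apply hehom]
    congr 2
    push_cast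
    ring
  rw [solve_neg (hct_aux hc n) h1]
  exact W.smul_mem _ (W.sub_mem (mulX0_mem hAll hc hdW hdhom) hWf)

include h12 in
theorem xC_mem {i : Fin m} (hi2 : ¬ (i : ℕ) < m2)
    {f : MvPolynomial (SpIdx m) F} {n : ℤ} (hf : f ∈ W) (hx : XF (Sum.inl 0 : SpIdx m) f)
    (hh : IsWeightedHomogeneous (wDm m m1 m2) f n) :
    X (Sum.inl i.succ) * f ∈ W := by
  have hi1 : ¬ (i : ℕ) < m1 := fun h => hi2 (lt_of_lt_of_le h h12)
  have hyW : X (Sum.inr i) * f ∈ W := yC_mem hAll h12 hi2 hf hx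
  have hyhom : IsWeightedHomogeneous (wDm m m1 m2) (X (Sum.inr i) * f) (n - 1) := by
    have h := hom_y hh (i := i)
    rwa [if_neg hi2] at h
  have hZf := hAll _ (Zsp_memFam i) f hf
  have h1 : Zsp F m m1 m2 c i f = -(X (Sum.inl 0) * (X (Sum.inr i) * f))
      + (ct F m m1 m2 c + (n : F)) • (X (Sum.inl i.succ) * f) := by
    rw [Zsp, if_neg hi1, if_neg hi2, LinearMap.add_apply, LinearMap.neg_apply,
      Module.End.mul_apply, Module.End.mul_apply, mx_apply, my_apply, E_apply hh, mx_apply,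
      mul_smul_comm]
  rw [solve_pos (hct_aux hc n) h1]
  exact W.smul_mem _ (W.sub_mem hZf (W.neg_mem (mulX0_mem hAll hc hyW hyhom)))

end Ops
end Chunk5

section Chunk6
variable {F : Type*} [Field F] [CharZero F] {m m1 m2 : ℕ}

theorem XF_monomial {t : SpIdx m →₀ ℕ} (h : t (Sum.inl 0) = 0) :
    XF (Sum.inl 0 : SpIdx m) (monomial t (1:F)) := by
  intro s hs
  rw [coeff_monomial] at hs
  split_ifs at hs with he
  · rw [← he]; exact h
  · exact absurd rfl hs

theorem Finsupp_sum_zero {σ : Type*} {t : σ →₀ ℕ} (h : (t.sum fun _ e => e) = 0) : t = 0 := by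
  ext v
  rcases eq_or_ne (t v) 0 with h0 | h0
  · simp [h0]
  · exfalso
    have hmem : v ∈ t.support := Finsupp.mem_support_iff.mpr h0
    rw [Finsupp.sum] at h
    exact h0 (Finset.sum_eq_zero_iff.mp h v hmem)

theorem exists_var_ne_zero {σ : Type*} {t : σ →₀ ℕ} (h : t ≠ 0) : ∃ v, t v ≠ 0 := by
  by_contra hno
  push_neg at hno
  exact h (Finsupp.ext hno)

end Chunk6

/-- if `m1 ≥ 1` and `c` is not an integer (times `1_F`), the only subspaces
of `A` invariant under every operator of the family `Π(c;m1,m2)` are `{0}` and `A`. -/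
theorem stmt_15 (F : Type*) [Field F] [CharZero F] (m m1 m2 : ℕ) (hm : 1 ≤ m)
    (hm1 : 1 ≤ m1) (h12 : m1 ≤ m2) (h2m : m2 ≤ m) (c : F)
    (hc : ∀ k : ℤ, c ≠ (k : F)) :
    ∀ W : Submodule F (MvPolynomial (SpIdx m) F),
      (∀ T ∈ FamT F m m1 m2 c, ∀ f ∈ W, T f ∈ W) →
      W = ⊥ ∨ W = ⊤ := by
  intro W hAll
  by_cases hbot : W = ⊥
  · exact Or.inl hbot
  right
  -- ∂_{x_0} preserves W
  have hU : ∀ f ∈ W, pderiv (Sum.inl 0 : SpIdx m) f ∈ W := by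
    intro f hf
    have h1 := hAll _ Usp_memFam f hf
    have h2 : Usp F m f = -(pderiv (Sum.inl 0) f) := by
      rw [Usp, LinearMap.neg_apply, dx_apply]
    have h3 := W.neg_mem h1
    rwa [h2, neg_neg] at h3
  -- per-variable derivative closure for x0-free homogeneous elements
  have hder : ∀ v : SpIdx m, v ≠ Sum.inl 0 → ∀ f ∈ W, XF (Sum.inl 0 : SpIdx m) f →
      ∀ n : ℤ, IsWeightedHomogeneous (wDm m m1 m2) f n → pderiv v f ∈ W := by
    intro v hv f hf hx n hh
    cases v with
    | inl j =>
      have hj : j ≠ 0 := fun h => hv (by rw [h])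
      obtain ⟨i, rfl⟩ := Fin.exists_succ_eq_of_ne_zero hj
      by_cases hi1 : (i : ℕ) < m1
      · exact dA_mem hAll hc h12 hi1 hf hx hh
      · by_cases hi2 : (i : ℕ) < m2
        · exact dB_mem hAll hi1 hi2 hf hx
        · exact dC_mem hAll h12 hi2 hf hx
    | inr i =>
      by_cases hi1 : (i : ℕ) < m1
      · exact eA_mem hAll hi1 hf hx
      · by_cases hi2 : (i : ℕ) < m2
        · exact eB_mem hAll hi1 hi2 hf hx
        · exact eC_mem hAll hc h12 hi2 hf hx hh
  -- per-variable multiplication closure for x0-free homogeneous elements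
  have hmul : ∀ v : SpIdx m, v ≠ Sum.inl 0 → ∀ f ∈ W, XF (Sum.inl 0 : SpIdx m) f →
      ∀ n : ℤ, IsWeightedHomogeneous (wDm m m1 m2) f n → X v * f ∈ W := by
    intro v hv f hf hx n hh
    cases v with
    | inl j =>
      have hj : j ≠ 0 := fun h => hv (by rw [h])
      obtain ⟨i, rfl⟩ := Fin.exists_succ_eq_of_ne_zero hj
      by_cases hi1 : (i : ℕ) < m1
      · exact xA_mem hAll hi1 hf hx
      · by_cases hi2 : (i : ℕ) < m2
        · exact xB_mem hAll hc hi1 hi2 hf hx hh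
        · exact xC_mem hAll hc h12 hi2 hf hx hh
    | inr i =>
      by_cases hi1 : (i : ℕ) < m1
      · exact yA_mem hAll hc hi1 hf hx hh
      · by_cases hi2 : (i : ℕ) < m2
        · exact yB_mem hAll hc hi1 hi2 hf hx hh
        · exact yC_mem hAll h12 hi2 hf hx
  -- Step 1 : a nonzero x0-free element of W
  obtain ⟨f0, hf0W, hf0ne⟩ := (Submodule.ne_bot_iff W).mp hbot
  have step1 : ∃ g ∈ W, g ≠ 0 ∧ XF (Sum.inl 0 : SpIdx m) g := by
    suffices key : ∀ N : ℕ, ∀ f, f ∈ W → f ≠ 0 →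
        (f.support.sup fun s => s (Sum.inl 0)) ≤ N →
        ∃ g ∈ W, g ≠ 0 ∧ XF (Sum.inl 0 : SpIdx m) g by
      exact key _ f0 hf0W hf0ne le_rfl
    intro N
    induction N with
    | zero =>
      intro f hf hne hd
      refine ⟨f, hf, hne, fun s hs => ?_⟩
      have h1 : s (Sum.inl 0) ≤ f.support.sup fun s => s (Sum.inl 0) :=
        Finset.le_sup (f := fun s : SpIdx m →₀ ℕ => s (Sum.inl 0))
          (MvPolynomial.mem_support_iff.mpr hs)
      omega
    | succ N ih =>
      intro f hf hne hd
      by_cases hXF : XF (Sum.inl 0 : SpIdx m) f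
      · exact ⟨f, hf, hne, hXF⟩
      · have hXF' := hXF
        rw [XF] at hXF'
        push_neg at hXF'
        obtain ⟨s, hcoeff, hsv⟩ := hXF'
        have hne' : pderiv (Sum.inl 0) f ≠ 0 := pderiv_ne_zero_aux hcoeff hsv
        have hlt := supX_pderiv_lt (f := f) (v0 := (Sum.inl 0 : SpIdx m)) hXF
        exact ih _ (hU f hf) hne' (by omega)
  obtain ⟨g, hgW, hgne, hgXF⟩ := step1
  -- Step 2 : a nonzero x0-free homogeneous element of W
  have hspec := spectral (W := W) (c := c) (fun f hf => hAll _ H0sp_memFam f hf)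
  obtain ⟨n, hn⟩ := exists_comp_ne_zero (m1 := m1) (m2 := m2) hgne
  set g1 := weightedHomogeneousComponent (wHm m m1 m2) n g with hg1
  have hg1W : g1 ∈ W := hspec g hgW n
  have hg1X : XF (Sum.inl 0 : SpIdx m) g1 := comp_XF hgXF n
  have hg1hom : IsWeightedHomogeneous (wDm m m1 m2) g1 n :=
    homog_wH_to_wD hg1X (weightedHomogeneousComponent_isWeightedHomogeneous n g)
  -- Step 3 : 1 ∈ W
  have hconst : ∀ h : MvPolynomial (SpIdx m) F, h ∈ W → h ≠ 0 → h.totalDegree = 0 →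
      (1 : MvPolynomial (SpIdx m) F) ∈ W := by
    intro h hhW hhne htd
    have hC : h = C (coeff 0 h) := by
      ext t
      rw [coeff_C]
      rcases eq_or_ne (0 : SpIdx m →₀ ℕ) t with h0 | h0
      · rw [if_pos h0, ← h0]
      · rw [if_neg h0]
        by_contra hne0
        have ht : t ∈ h.support := MvPolynomial.mem_support_iff.mpr hne0
        have := (totalDegree_eq_zero_iff (SpIdx m) h).mp htd t ht
        exact h0 (Eq.symm (Finsupp.ext this))
    have ha : coeff 0 h ≠ 0 := by
      intro h0
      rw [h0, map_zero] at hC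
      exact hhne hC
    obtain ⟨a, hCa, ha'⟩ : ∃ a : F, h = C a ∧ a ≠ 0 := ⟨coeff 0 h, hC, ha⟩
    subst hCa
    have h1 : (1 : MvPolynomial (SpIdx m) F) = a⁻¹ • C a := by
      rw [smul_eq_C_mul, ← C_mul, inv_mul_cancel₀ ha', C_1]
    rw [h1]
    exact W.smul_mem _ hhW
  have step3 : (1 : MvPolynomial (SpIdx m) F) ∈ W := by
    suffices key : ∀ N : ℕ, ∀ h : MvPolynomial (SpIdx m) F, h ∈ W → h ≠ 0 →
        XF (Sum.inl 0 : SpIdx m) h → (∃ k : ℤ, IsWeightedHomogeneous (wDm m m1 m2) h k) →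
        h.totalDegree ≤ N → (1 : MvPolynomial (SpIdx m) F) ∈ W by
      exact key _ g1 hg1W hn hg1X ⟨n, hg1hom⟩ le_rfl
    intro N
    induction N with
    | zero =>
      intro h hhW hhne _ _ htd
      exact hconst h hhW hhne (Nat.le_zero.mp htd)
    | succ N ih =>
      intro h hhW hhne hhX hhhom htd
      obtain ⟨k, hk⟩ := hhhom
      by_cases htd0 : h.totalDegree = 0
      · exact hconst h hhW hhne htd0
      · obtain ⟨s, hs, hsup⟩ := Finset.exists_mem_eq_sup h.support
          (support_nonempty.mpr hhne) (fun s : SpIdx m →₀ ℕ => s.sum fun _ e => e)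
        have hssum : (s.sum fun _ e => e) ≠ 0 := by
          intro h0
          apply htd0
          rw [totalDegree, hsup, h0]
        have hsne : s ≠ 0 := fun h0 => hssum (by rw [h0]; simp)
        obtain ⟨v, hv⟩ := exists_var_ne_zero hsne
        have hcoeff : coeff s h ≠ 0 := MvPolynomial.mem_support_iff.mp hs
        have hv0 : v ≠ Sum.inl 0 := by
          intro h0
          rw [h0] at hv
          exact hv (hhX s hcoeff)
        have hdW : pderiv v h ∈ W := hder v hv0 h hhW hhX k hk
        have hdne : pderiv v h ≠ 0 := pderiv_ne_zero_aux hcoeff hv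
        have hdtd := totalDegree_pderiv_lt hcoeff hv
        exact ih _ hdW hdne (hhX.pderiv v) ⟨k - wDm m m1 m2 v, IsWH_pderiv hk v⟩ (by omega)
  -- Step 4 : all x0-free monomials
  have step4 : ∀ t : SpIdx m →₀ ℕ, t (Sum.inl 0) = 0 → (monomial t (1:F)) ∈ W := by
    suffices key : ∀ N : ℕ, ∀ t : SpIdx m →₀ ℕ, (t.sum fun _ e => e) ≤ N →
        t (Sum.inl 0) = 0 → (monomial t (1:F)) ∈ W by
      exact fun t ht => key _ t le_rfl ht
    intro N
    induction N with
    | zero =>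
      intro t hsum ht
      have h0 : t = 0 := Finsupp_sum_zero (Nat.le_zero.mp hsum)
      rw [h0]
      rw [monomial_zero']
      simpa using step3
    | succ N ih =>
      intro t hsum ht
      rcases eq_or_ne t 0 with rfl | hne
      · rw [monomial_zero']
        simpa using step3
      · obtain ⟨v, hv⟩ := exists_var_ne_zero hne
        have hv0 : v ≠ Sum.inl 0 := by
          intro h0
          rw [h0] at hv
          exact hv ht
        set t' := t - Finsupp.single v 1 with ht'
        have hadd : t' + Finsupp.single v 1 = t := Finsupp_sub_add_single hv
        have ht'0 : t' (Sum.inl 0) = 0 := by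
          rw [ht', Finsupp.tsub_apply]
          omega
        have hsum' : (t'.sum fun _ e => e) ≤ N := by
          have h1 : ((t' + Finsupp.single v 1).sum fun _ e => e)
              = (t'.sum fun _ e => e) + 1 := by
            rw [Finsupp.sum_add_index' (fun _ => rfl) (fun _ _ _ => rfl),
              Finsupp.sum_single_index rfl]
          rw [hadd] at h1
          omega
        have ht'W : monomial t' (1:F) ∈ W := ih t' hsum' ht'0
        have heq : monomial t (1:F) = X v * monomial t' (1:F) := by
          rw [X_mul_monomial', hadd]
        rw [heq]
        exact hmul v hv0 _ ht'W (XF_monomial ht'0) _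
          (isWeightedHomogeneous_monomial _ _ _ rfl)
  -- Step 5 : all monomials
  have step5 : ∀ s : SpIdx m →₀ ℕ, (monomial s (1:F)) ∈ W := by
    have key : ∀ k : ℕ, ∀ t : SpIdx m →₀ ℕ, t (Sum.inl 0) = 0 →
        (monomial (t + Finsupp.single (Sum.inl 0) k) (1:F)) ∈ W := by
      intro k
      induction k with
      | zero =>
        intro t ht
        rw [Finsupp.single_zero, add_zero]
        exact step4 t ht
      | succ k ih =>
        intro t ht
        have heq : t + Finsupp.single (Sum.inl 0 : SpIdx m) (k+1)
            = (t + Finsupp.single (Sum.inl 0) k) + Finsupp.single (Sum.inl 0) 1 := by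
          rw [add_assoc, ← Finsupp.single_add]
        rw [heq, ← X_mul_monomial']
        exact mulX0_mem hAll hc (ih t ht) (isWeightedHomogeneous_monomial _ _ _ rfl)
    intro s
    have hdec : s = (s - Finsupp.single (Sum.inl 0) (s (Sum.inl 0)))
        + Finsupp.single (Sum.inl 0) (s (Sum.inl 0)) := by
      ext u
      simp only [Finsupp.add_apply, Finsupp.tsub_apply, Finsupp.single_apply]
      rcases eq_or_ne (Sum.inl 0 : SpIdx m) u with rfl | hu
      · rw [if_pos rfl]; omega
      · rw [if_neg hu]; omega
    have h0 : (s - Finsupp.single (Sum.inl 0) (s (Sum.inl 0)) : SpIdx m →₀ ℕ)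
        (Sum.inl 0) = 0 := by
      rw [Finsupp.tsub_apply, Finsupp.single_apply, if_pos rfl]
      omega
    rw [hdec]
    exact key _ _ h0
  -- conclusion
  rw [Submodule.eq_top_iff']
  intro f
  rw [f.as_sum]
  refine W.sum_mem fun s _ => ?_
  have heq : monomial s (coeff s f) = (coeff s f) • monomial s (1:F) := by
    rw [smul_monomial, smul_eq_mul, mul_one]
  rw [heq]
  exact W.smul_mem _ (step5 s)
end
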